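/- arXiv:2111.03238 — 11 statements merged into one kernel-verified Lean document; each statement's English description precedes it below -/
import Mathlib

section
/- Let A ∈ ℂ^{n×n×n×n} be a conjugate partial-symmetric (CPS) tensor. Then there exist r ∈ ℕ, real numbers λ_1,…,λ_r, and symmetric matrices E_1,…,E_r ∈ ℂ^{n×n} with ⟨E_i,E_j⟩ = δ_ij for all i,j, such that A = Σ_{i=1}^r λ_i E_i∘conj(E_i), i.e., A_{ijkl} = Σ_{t=1}^r λ_t (E_t)_{ij} conj((E_t)_{kl}) for all indices. -/
/-!
Flattening `A` along the index pairs `(i, j)` and `(k, l)` gives a Hermitian matrix `M` on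
`ℂ^(n × n)`; its spectral decomposition, restricted to the nonzero eigenvalues, is the required
sum. The rows of this matrix are invariant under `(i, j) ↦ (j, i)`, hence so is `M v = λ v` for
every eigenvector `v`, and when `λ ≠ 0` this makes the reshaped eigenvector a symmetric matrix.
-/

open scoped BigOperators

/-- A fourth-order complex tensor is conjugate partial-symmetric (CPS). -/
def IsCPS {n : ℕ} (A : Fin n → Fin n → Fin n → Fin n → ℂ) : Prop :=
  ∀ i j k l, A i j k l = A j i k l ∧ A i j k l = A i j l k ∧
    A i j k l = starRingEnd ℂ (A k l i j)

open Matrix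

theorem Orthonormal.sum_mul_star_eq_ite {𝕜 ι κ : Type*} [RCLike 𝕜] [Fintype ι] [DecidableEq κ]
    {v : κ → EuclideanSpace 𝕜 ι} (hv : Orthonormal 𝕜 v) (s t : κ) :
    ∑ p, v s p * starRingEnd 𝕜 (v t p) = if s = t then 1 else 0 := by
  simpa [EuclideanSpace.inner_eq_star_dotProduct, dotProduct, eq_comm] using
    orthonormal_iff_ite.mp hv t s

theorem Matrix.comp_eq_of_mulVec_eq_smul {K ι : Type*} [Field K] [Fintype ι]
    {M : Matrix ι ι K} {σ : ι → ι} (hσ : ∀ p, M (σ p) = M p) {v : ι → K} {c : K}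
    (hc : c ≠ 0) (hv : M *ᵥ v = c • v) : v ∘ σ = v := by
  funext p
  have h : (M *ᵥ v) (σ p) = (M *ᵥ v) p := by simp only [mulVec, hσ]
  rw [hv] at h
  exact mul_left_cancel₀ hc h

namespace Matrix.IsHermitian

variable {𝕜 ι : Type*} [RCLike 𝕜] [Fintype ι] [DecidableEq ι] {M : Matrix ι ι 𝕜}

theorem apply_eq_sum_eigenvectorBasis (hM : M.IsHermitian) (i j : ι) :
    M i j = ∑ t, (hM.eigenvalues t : 𝕜) * hM.eigenvectorBasis t i *
      starRingEnd 𝕜 (hM.eigenvectorBasis t j) := by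
  conv_lhs => rw [hM.spectral_theorem, Unitary.conjStarAlgAut_apply]
  rw [mul_apply]
  refine Finset.sum_congr rfl fun t _ => ?_
  simp only [mul_diagonal, star_apply, eigenvectorUnitary_apply, Function.comp_apply,
    RCLike.star_def]
  ring

end Matrix.IsHermitian

def unfolding {ι α : Type*} (A : ι → ι → ι → ι → α) : Matrix (ι × ι) (ι × ι) α :=
  of fun p q => A p.1 p.2 q.1 q.2

namespace IsCPS

variable {n : ℕ} {A : Fin n → Fin n → Fin n → Fin n → ℂ}

theorem isHermitian_unfolding (hA : IsCPS A) : (unfolding A).IsHermitian := by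
  ext p q
  simp [unfolding, (hA p.1 p.2 q.1 q.2).2.2]

theorem unfolding_swap (hA : IsCPS A) (p : Fin n × Fin n) :
    unfolding A p.swap = unfolding A p := by
  funext q
  exact ((hA p.1 p.2 q.1 q.2).1).symm

theorem isSymm_eigenvector (hA : IsCPS A) (t : Fin n × Fin n)
    (ht : hA.isHermitian_unfolding.eigenvalues t ≠ 0) :
    (of fun i j => hA.isHermitian_unfolding.eigenvectorBasis t (i, j)).IsSymm := by
  have hv := hA.isHermitian_unfolding.mulVec_eigenvectorBasis t
  rw [RCLike.real_smul_eq_coe_smul (K := ℂ)] at hv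
  have h := comp_eq_of_mulVec_eq_smul hA.unfolding_swap (RCLike.ofReal_ne_zero.mpr ht) hv
  ext i j
  exact congrFun h (i, j)

end IsCPS

/-- Every CPS tensor admits an orthonormal symmetric matrix outer product
decomposition `A = Σ λ_t E_t ∘ conj(E_t)` with real `λ_t`. -/
theorem cps_matrix_outer_decomposition {n : ℕ}
    (A : Fin n → Fin n → Fin n → Fin n → ℂ) (hA : IsCPS A) :
    ∃ (r : ℕ) (lam : Fin r → ℝ) (E : Fin r → Matrix (Fin n) (Fin n) ℂ),
      (∀ t, (E t).IsSymm) ∧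
      (∀ s t, (∑ i, ∑ j, E s i j * starRingEnd ℂ (E t i j)) =
        if s = t then 1 else 0) ∧
      (∀ i j k l, A i j k l =
        ∑ t, (lam t : ℂ) * E t i j * starRingEnd ℂ (E t k l)) := by
  classical
  set hM := hA.isHermitian_unfolding
  set v := hM.eigenvectorBasis
  set S := {t // hM.eigenvalues t ≠ 0}
  let u : Fin (Fintype.card S) → Fin n × Fin n := fun s => (Fintype.equivFin S).symm s
  have hu : u.Injective := Subtype.val_injective.comp (Fintype.equivFin S).symm.injective
  refine ⟨_, fun s => hM.eigenvalues (u s), fun s => of fun i j => v (u s) (i, j),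
    fun s => hA.isSymm_eigenvector _ ((Fintype.equivFin S).symm s).2, fun s t => ?_,
    fun i j k l => ?_⟩
  · simp only [of_apply]
    rw [← Fintype.sum_prod_type', v.orthonormal.sum_mul_star_eq_ite]
    simp only [hu.eq_iff]
  · let f : Fin n × Fin n → ℂ := fun t =>
      (hM.eigenvalues t : ℂ) * v t (i, j) * starRingEnd ℂ (v t (k, l))
    calc A i j k l = ∑ t, f t := hM.apply_eq_sum_eigenvectorBasis (i, j) (k, l)
      _ = ∑ t : S, f t := by
        rw [← Fintype.sum_subtype_add_sum_subtype (fun t => hM.eigenvalues t ≠ 0),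
          Fintype.sum_eq_zero (fun t : {t // ¬hM.eigenvalues t ≠ 0} => f t), add_zero]
        intro t
        simp [f, not_not.mp t.2]
      _ = ∑ s, f (u s) := ((Fintype.equivFin S).symm.sum_comp _).symm
end

section
/- Let A ∈ ℂ^{n×n×n×n} be a conjugate partial-symmetric (CPS) tensor. Then the smallest r for which A = Σ_{i=1}^r λ_i E_i∘conj(E_i) with λ_i ∈ ℝ and E_i ∈ ℂ^{n×n} symmetric matrices equals the smallest r for which A = Σ_{i=1}^r λ_i E_i∘conj(E_i) with λ_i ∈ ℝ and E_i ∈ ℂ^{n×n} arbitrary matrices. -/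
open scoped BigOperators

/-- For a CPS tensor, the smallest length of a decomposition
`A = Σ λ_t E_t ∘ conj(E_t)` with symmetric matrices `E_t` equals the smallest
length of such a decomposition with arbitrary matrices `E_t`. -/
theorem cps_rankM_eq_rankSM {n : ℕ}
    (A : Fin n → Fin n → Fin n → Fin n → ℂ) (hA : IsCPS A) :
    sInf {r : ℕ | ∃ (lam : Fin r → ℝ) (E : Fin r → Matrix (Fin n) (Fin n) ℂ),
        (∀ t, (E t).IsSymm) ∧
        ∀ i j k l, A i j k l =
          ∑ t, (lam t : ℂ) * E t i j * starRingEnd ℂ (E t k l)} =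
    sInf {r : ℕ | ∃ (lam : Fin r → ℝ) (E : Fin r → Matrix (Fin n) (Fin n) ℂ),
        ∀ i j k l, A i j k l =
          ∑ t, (lam t : ℂ) * E t i j * starRingEnd ℂ (E t k l)} := by
  congr 1
  ext r
  simp only [Set.mem_setOf_eq]
  constructor
  · rintro ⟨lam, E, _, h⟩
    exact ⟨lam, E, h⟩
  · rintro ⟨lam, E, h⟩
    refine ⟨lam, fun t => Matrix.of fun i j => (E t i j + E t j i) / 2, ?_, ?_⟩
    · intro t
      ext i j
      simp only [Matrix.transpose_apply, Matrix.of_apply]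
      ring
    · intro i j k l
      have key : ∀ t : Fin r, (lam t : ℂ) *
          (Matrix.of fun i j => (E t i j + E t j i) / 2) i j *
          starRingEnd ℂ ((Matrix.of fun i j => (E t i j + E t j i) / 2) k l) =
          ((lam t : ℂ) * E t i j * starRingEnd ℂ (E t k l)
          + (lam t : ℂ) * E t i j * starRingEnd ℂ (E t l k)
          + (lam t : ℂ) * E t j i * starRingEnd ℂ (E t k l)
          + (lam t : ℂ) * E t j i * starRingEnd ℂ (E t l k)) / 4 := by
        intro t
        simp only [Matrix.of_apply, map_div₀, map_add, map_ofNat]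
        ring
      have h1 := h i j k l
      have h2 := h i j l k
      have h3 := h j i k l
      have h4 := h j i l k
      have e1 : A i j l k = A i j k l := ((hA i j k l).2.1).symm
      have e2 : A j i k l = A i j k l := ((hA i j k l).1).symm
      have e3 : A j i l k = A i j k l := by
        rw [← (hA j i k l).2.1, ← (hA i j k l).1]
      rw [Finset.sum_congr rfl fun t _ => key t, ← Finset.sum_div,
        Finset.sum_add_distrib, Finset.sum_add_distrib, Finset.sum_add_distrib,
        ← h1, ← h2, ← h3, ← h4, e1, e2, e3]
      ring
end

section
/- Let A ∈ ℝ^{n×n×n×n} be a partial-symmetric tensor. Then there exist finitely many real numbers λ_i and vectors p_i, q_i ∈ ℝ^n such that A = Σ_i λ_i (p_i∘p_i∘q_i∘q_i + q_i∘q_i∘p_i∘p_i). -/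
open scoped BigOperators
set_option maxHeartbeats 1600000

/-- A fourth-order real tensor is partial-symmetric. -/
def IsPS {n : ℕ} (A : Fin n → Fin n → Fin n → Fin n → ℝ) : Prop :=
  ∀ i j k l, A i j k l = A j i k l ∧ A i j k l = A i j l k ∧
    A i j k l = A k l i j

/-- Indicator vector. -/
def ee {n : ℕ} (a i : Fin n) : ℝ := if a = i then 1 else 0

/-- The three polarization vectors attached to a pair `(a,b)`. -/
def vv {n : ℕ} (a b : Fin n) (s : Fin 3) (i : Fin n) : ℝ :=
  if s = 0 then ee a i + ee b i else if s = 1 then ee a i else ee b i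

/-- Signs for the polarization identity. -/
def sg (s : Fin 3) : ℝ := if s = 0 then 1 else -1

lemma pol {n : ℕ} (a b i j : Fin n) :
    ∑ s : Fin 3, sg s * (vv a b s i * vv a b s j)
      = ee a i * ee b j + ee b i * ee a j := by
  simp [Fin.sum_univ_three, vv, sg]
  ring

/-- A partial-symmetric real tensor can be written as a finite sum
`A = Σ λ_t (p_t∘p_t∘q_t∘q_t + q_t∘q_t∘p_t∘p_t)`. -/
theorem ps_vector_decomposition {n : ℕ}
    (A : Fin n → Fin n → Fin n → Fin n → ℝ) (hA : IsPS A) :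
    ∃ (r : ℕ) (lam : Fin r → ℝ) (p q : Fin r → Fin n → ℝ),
      ∀ i j k l, A i j k l =
        ∑ t, lam t * (p t i * p t j * q t k * q t l +
          q t i * q t j * p t k * p t l) := by
  classical
  let ε : (Fin n × Fin n × Fin n × Fin n × Fin 3 × Fin 3) ≃ Fin (Fintype.card (Fin n × Fin n × Fin n × Fin n × Fin 3 × Fin 3)) := Fintype.equivFin _
  refine ⟨Fintype.card (Fin n × Fin n × Fin n × Fin n × Fin 3 × Fin 3),
    fun t => (1/8) * A (ε.symm t).1 (ε.symm t).2.1 (ε.symm t).2.2.1 (ε.symm t).2.2.2.1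
      * sg (ε.symm t).2.2.2.2.1 * sg (ε.symm t).2.2.2.2.2,
    fun t => vv (ε.symm t).1 (ε.symm t).2.1 (ε.symm t).2.2.2.2.1,
    fun t => vv (ε.symm t).2.2.1 (ε.symm t).2.2.2.1 (ε.symm t).2.2.2.2.2, ?_⟩
  intro i j k l
  have hsum :
      (∑ t : Fin (Fintype.card (Fin n × Fin n × Fin n × Fin n × Fin 3 × Fin 3)),
        ((1/8) * A (ε.symm t).1 (ε.symm t).2.1 (ε.symm t).2.2.1 (ε.symm t).2.2.2.1
          * sg (ε.symm t).2.2.2.2.1 * sg (ε.symm t).2.2.2.2.2) *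
        (vv (ε.symm t).1 (ε.symm t).2.1 (ε.symm t).2.2.2.2.1 i *
         vv (ε.symm t).1 (ε.symm t).2.1 (ε.symm t).2.2.2.2.1 j *
         vv (ε.symm t).2.2.1 (ε.symm t).2.2.2.1 (ε.symm t).2.2.2.2.2 k *
         vv (ε.symm t).2.2.1 (ε.symm t).2.2.2.1 (ε.symm t).2.2.2.2.2 l +
         vv (ε.symm t).2.2.1 (ε.symm t).2.2.2.1 (ε.symm t).2.2.2.2.2 i *
         vv (ε.symm t).2.2.1 (ε.symm t).2.2.2.1 (ε.symm t).2.2.2.2.2 j *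
         vv (ε.symm t).1 (ε.symm t).2.1 (ε.symm t).2.2.2.2.1 k *
         vv (ε.symm t).1 (ε.symm t).2.1 (ε.symm t).2.2.2.2.1 l))
      = ∑ u : Fin n × Fin n × Fin n × Fin n × Fin 3 × Fin 3,
        ((1/8) * A u.1 u.2.1 u.2.2.1 u.2.2.2.1 * sg u.2.2.2.2.1 * sg u.2.2.2.2.2) *
        (vv u.1 u.2.1 u.2.2.2.2.1 i * vv u.1 u.2.1 u.2.2.2.2.1 j *
         vv u.2.2.1 u.2.2.2.1 u.2.2.2.2.2 k * vv u.2.2.1 u.2.2.2.1 u.2.2.2.2.2 l +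
         vv u.2.2.1 u.2.2.2.1 u.2.2.2.2.2 i * vv u.2.2.1 u.2.2.2.1 u.2.2.2.2.2 j *
         vv u.1 u.2.1 u.2.2.2.2.1 k * vv u.1 u.2.1 u.2.2.2.2.1 l) :=
    Fintype.sum_equiv ε.symm _ _ (fun t => rfl)
  rw [hsum]
  -- unfold the product sum
  rw [show (∑ u : Fin n × Fin n × Fin n × Fin n × Fin 3 × Fin 3,
        ((1/8) * A u.1 u.2.1 u.2.2.1 u.2.2.2.1 * sg u.2.2.2.2.1 * sg u.2.2.2.2.2) *
        (vv u.1 u.2.1 u.2.2.2.2.1 i * vv u.1 u.2.1 u.2.2.2.2.1 j *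
         vv u.2.2.1 u.2.2.2.1 u.2.2.2.2.2 k * vv u.2.2.1 u.2.2.2.1 u.2.2.2.2.2 l +
         vv u.2.2.1 u.2.2.2.1 u.2.2.2.2.2 i * vv u.2.2.1 u.2.2.2.1 u.2.2.2.2.2 j *
         vv u.1 u.2.1 u.2.2.2.2.1 k * vv u.1 u.2.1 u.2.2.2.2.1 l))
      = ∑ a : Fin n, ∑ b : Fin n, ∑ c : Fin n, ∑ d : Fin n, ∑ s : Fin 3, ∑ s' : Fin 3,
        ((1/8) * A a b c d * sg s * sg s') *
        (vv a b s i * vv a b s j * vv c d s' k * vv c d s' l +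
         vv c d s' i * vv c d s' j * vv a b s k * vv a b s l) from by
    simp [Fintype.sum_prod_type]]
  -- evaluate the inner polarization sums
  have hinner : ∀ a b c d : Fin n,
      (∑ s : Fin 3, ∑ s' : Fin 3,
        ((1/8) * A a b c d * sg s * sg s') *
        (vv a b s i * vv a b s j * vv c d s' k * vv c d s' l +
         vv c d s' i * vv c d s' j * vv a b s k * vv a b s l))
      = (1/8) * A a b c d *
        ((ee a i * ee b j + ee b i * ee a j) * (ee c k * ee d l + ee d k * ee c l) +
         (ee c i * ee d j + ee d i * ee c j) * (ee a k * ee b l + ee b k * ee a l)) := by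
    intro a b c d
    have p1 := pol a b i j
    have p2 := pol c d k l
    have p3 := pol c d i j
    have p4 := pol a b k l
    rw [← p1, ← p2, ← p3, ← p4]
    simp only [Fin.sum_univ_three]
    ring
  simp only [hinner]
  have key : ∀ w x y z : Fin n,
      (∑ a : Fin n, ∑ b : Fin n, ∑ c : Fin n, ∑ d : Fin n,
        A a b c d * ee a w * ee b x * ee c y * ee d z) = A w x y z := by
    intro w x y z
    simp [ee, mul_ite, ite_mul, mul_zero, zero_mul, mul_one, one_mul,
      Finset.sum_ite_eq', Finset.mem_univ]
  have expand :
      (∑ a : Fin n, ∑ b : Fin n, ∑ c : Fin n, ∑ d : Fin n,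
        (1/8) * A a b c d *
        ((ee a i * ee b j + ee b i * ee a j) * (ee c k * ee d l + ee d k * ee c l) +
         (ee c i * ee d j + ee d i * ee c j) * (ee a k * ee b l + ee b k * ee a l)))
      = (1/8) * (A i j k l + A j i k l + A i j l k + A j i l k
          + A k l i j + A k l j i + A l k i j + A l k j i) := by
    have distrib : ∀ a b c d : Fin n,
        (1/8) * A a b c d *
        ((ee a i * ee b j + ee b i * ee a j) * (ee c k * ee d l + ee d k * ee c l) +
         (ee c i * ee d j + ee d i * ee c j) * (ee a k * ee b l + ee b k * ee a l))
      = (1/8) * (A a b c d * ee a i * ee b j * ee c k * ee d l)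
        + (1/8) * (A a b c d * ee b i * ee a j * ee c k * ee d l)
        + (1/8) * (A a b c d * ee a i * ee b j * ee d k * ee c l)
        + (1/8) * (A a b c d * ee b i * ee a j * ee d k * ee c l)
        + (1/8) * (A a b c d * ee c i * ee d j * ee a k * ee b l)
        + (1/8) * (A a b c d * ee d i * ee c j * ee a k * ee b l)
        + (1/8) * (A a b c d * ee c i * ee d j * ee b k * ee a l)
        + (1/8) * (A a b c d * ee d i * ee c j * ee b k * ee a l) := by
      intro a b c d; ring
    simp only [distrib, Finset.sum_add_distrib, ← Finset.mul_sum]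
    have k1 := key i j k l
    have k2 : (∑ a : Fin n, ∑ b : Fin n, ∑ c : Fin n, ∑ d : Fin n,
        A a b c d * ee b i * ee a j * ee c k * ee d l) = A j i k l := by
      rw [← key j i k l]; congr 1; ext a; congr 1; ext b; congr 1; ext c; congr 1; ext d; ring
    have k3 : (∑ a : Fin n, ∑ b : Fin n, ∑ c : Fin n, ∑ d : Fin n,
        A a b c d * ee a i * ee b j * ee d k * ee c l) = A i j l k := by
      rw [← key i j l k]; congr 1; ext a; congr 1; ext b; congr 1; ext c; congr 1; ext d; ring
    have k4 : (∑ a : Fin n, ∑ b : Fin n, ∑ c : Fin n, ∑ d : Fin n,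
        A a b c d * ee b i * ee a j * ee d k * ee c l) = A j i l k := by
      rw [← key j i l k]; congr 1; ext a; congr 1; ext b; congr 1; ext c; congr 1; ext d; ring
    have k5 : (∑ a : Fin n, ∑ b : Fin n, ∑ c : Fin n, ∑ d : Fin n,
        A a b c d * ee c i * ee d j * ee a k * ee b l) = A k l i j := by
      rw [← key k l i j]; congr 1; ext a; congr 1; ext b; congr 1; ext c; congr 1; ext d; ring
    have k6 : (∑ a : Fin n, ∑ b : Fin n, ∑ c : Fin n, ∑ d : Fin n,
        A a b c d * ee d i * ee c j * ee a k * ee b l) = A k l j i := by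
      rw [← key k l j i]; congr 1; ext a; congr 1; ext b; congr 1; ext c; congr 1; ext d; ring
    have k7 : (∑ a : Fin n, ∑ b : Fin n, ∑ c : Fin n, ∑ d : Fin n,
        A a b c d * ee c i * ee d j * ee b k * ee a l) = A l k i j := by
      rw [← key l k i j]; congr 1; ext a; congr 1; ext b; congr 1; ext c; congr 1; ext d; ring
    have k8 : (∑ a : Fin n, ∑ b : Fin n, ∑ c : Fin n, ∑ d : Fin n,
        A a b c d * ee d i * ee c j * ee b k * ee a l) = A l k j i := by
      rw [← key l k j i]; congr 1; ext a; congr 1; ext b; congr 1; ext c; congr 1; ext d; ring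
    rw [k1, k2, k3, k4, k5, k6, k7, k8]
    ring
  rw [expand]
  have e1 := (hA i j k l).1
  have e2 := (hA i j k l).2.1
  have e3 := (hA j i k l).2.1
  have e4 := (hA i j k l).2.2
  have e5 := (hA j i k l).2.2
  have e6 := (hA i j l k).2.2
  have e7 := (hA j i l k).2.2
  linarith
end

section
/- Let A = Σ_{i=1}^r λ_i E_i∘conj(E_i), where λ_1,…,λ_r are pairwise distinct nonzero real numbers and E_1,…,E_r ∈ ℂ^{n×n} are symmetric matrices with ⟨E_i,E_j⟩ = δ_ij. Define recursively A_0 = A, and for j = 1,…,r: let X̂_j be any maximizer of |⟨A_{j−1}, X∘conj(X)⟩| over symmetric matrices X ∈ ℂ^{n×n} with ‖X‖_F = 1, let λ̂_j = ⟨A_{j−1}, X̂_j∘conj(X̂_j)⟩, and set A_j = A_{j−1} − λ̂_j X̂_j∘conj(X̂_j). Then there exist a permutation π of {1,…,r} and complex numbers c_1,…,c_r with |c_j| = 1 such that λ̂_j = λ_{π(j)} and X̂_j = c_j·E_{π(j)} for all j, and A_r = 0. -/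
/-!
Flatten matrices to vectors of `EuclideanSpace ℂ (Fin n × Fin n)`. On `X ∘ conj(X)` the tensor
`∑_{t ∈ S} λ_t E_t ∘ conj(E_t)` takes the real value `∑_{t ∈ S} λ_t |⟨E_t, X⟩|²`. For a unit `X`
the weights `|⟨E_t, X⟩|²` sum to at most `1` (Bessel), while the competitor `X = E_u` gives the
value `λ_u`; so a maximizer puts all its weight on one index `t`, whence `X = c E_t` with `|c| = 1`
and value `λ_t`, because the `λ_t` are distinct and nonzero. Deflation then removes exactly the
term of `t`, so the greedy steps exhaust the indices one at a time and leave the zero tensor.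
-/

open scoped BigOperators

/-- Inner product of fourth-order complex tensors. -/
noncomputable def tInner {n : ℕ} (A B : Fin n → Fin n → Fin n → Fin n → ℂ) : ℂ :=
  ∑ i, ∑ j, ∑ k, ∑ l, A i j k l * starRingEnd ℂ (B i j k l)

/-- Frobenius norm of a complex matrix. -/
noncomputable def mNorm {n : ℕ} (X : Matrix (Fin n) (Fin n) ℂ) : ℝ :=
  Real.sqrt (∑ i, ∑ j, ‖X i j‖ ^ 2)

/-- The fourth-order tensor `X ∘ conj(X)`. -/
def conjOuter {n : ℕ} (X : Matrix (Fin n) (Fin n) ℂ) :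
    Fin n → Fin n → Fin n → Fin n → ℂ :=
  fun i j k l => X i j * starRingEnd ℂ (X k l)

open Finset

theorem exists_weight_eq_one_of_forall_abs_le {ι : Type*} {S : Finset ι} {lam w : ι → ℝ}
    (hS : S.Nonempty) (hlam0 : ∀ t ∈ S, lam t ≠ 0) (hinj : Set.InjOn lam S)
    (hw : ∀ t ∈ S, 0 ≤ w t) (hw1 : ∑ t ∈ S, w t ≤ 1)
    (hmax : ∀ u ∈ S, |lam u| ≤ |∑ t ∈ S, lam t * w t|) :
    ∃ t₀ ∈ S, w t₀ = 1 ∧ ∑ t ∈ S, lam t * w t = lam t₀ := by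
  set ρ := ∑ t ∈ S, lam t * w t
  obtain ⟨u, hu⟩ := hS
  have hρ : 0 < |ρ| := (abs_pos.2 (hlam0 u hu)).trans_le (hmax u hu)
  obtain ⟨σ, hσ, hσρ⟩ : ∃ σ : ℝ, |σ| = 1 ∧ σ * ρ = |ρ| := by
    rcases abs_choice ρ with h | h
    · exact ⟨1, abs_one, by rw [h, one_mul]⟩
    · exact ⟨-1, by simp, by rw [h, neg_one_mul]⟩
  have hσ0 : σ ≠ 0 := by rintro rfl; simp at hσ
  -- every term of `∑ (|ρ| - σ λ_t) w_t = |ρ| (∑ w_t - 1) ≤ 0` is nonnegative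
  have hterm : ∀ t ∈ S, 0 ≤ (|ρ| - σ * lam t) * w t := fun t ht => by
    have hσlam : σ * lam t ≤ |ρ| :=
      (le_abs_self _).trans (by rw [abs_mul, hσ, one_mul]; exact hmax t ht)
    exact mul_nonneg (sub_nonneg.2 hσlam) (hw t ht)
  have hsum : ∑ t ∈ S, (|ρ| - σ * lam t) * w t = |ρ| * (∑ t ∈ S, w t - 1) := by
    simp only [sub_mul, sum_sub_distrib, ← mul_sum, mul_assoc, ρ] at hσρ ⊢
    rw [hσρ]; ring
  have hsum0 : ∑ t ∈ S, (|ρ| - σ * lam t) * w t = 0 :=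
    le_antisymm (hsum ▸ mul_nonpos_of_nonneg_of_nonpos hρ.le (by linarith)) (sum_nonneg hterm)
  have hw_sum : ∑ t ∈ S, w t = 1 := by
    rw [hsum] at hsum0; linarith [(mul_eq_zero.1 hsum0).resolve_left hρ.ne']
  have hzero := (sum_eq_zero_iff_of_nonneg hterm).1 hsum0
  obtain ⟨t₀, ht₀, hwt₀⟩ := exists_ne_zero_of_sum_ne_zero (hw_sum ▸ one_ne_zero : ∑ t ∈ S, w t ≠ 0)
  have hlamt₀ : σ * lam t₀ = |ρ| := by
    linarith [(mul_eq_zero.1 (hzero t₀ ht₀)).resolve_right hwt₀]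
  have hother : ∀ t ∈ S, t ≠ t₀ → w t = 0 := fun t ht hne =>
    (mul_eq_zero.1 (hzero t ht)).resolve_left fun h => hne <|
      hinj ht ht₀ (mul_left_cancel₀ hσ0 (by linarith))
  refine ⟨t₀, ht₀, ?_, mul_left_cancel₀ hσ0 (hσρ.trans hlamt₀.symm)⟩
  rwa [sum_eq_single_of_mem t₀ ht₀ hother] at hw_sum

section InnerProductSpace
variable {𝕜 V : Type*} [RCLike 𝕜] [NormedAddCommGroup V] [InnerProductSpace 𝕜 V]

theorem eq_inner_smul_of_norm_inner_eq_one {e x : V} (he : ‖e‖ = 1) (h : ‖inner 𝕜 e x‖ = 1)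
    (hx : ‖x‖ = 1) : x = inner 𝕜 e x • e := by
  have := ((norm_inner_eq_norm_tfae 𝕜 e x).out 0 1).1 (by rw [h, he, hx, one_mul])
  rwa [or_iff_right (norm_ne_zero_iff.1 (he ▸ one_ne_zero)), inner_self_eq_norm_sq_to_K, he,
    RCLike.ofReal_one, one_pow, div_one] at this

theorem Orthonormal.exists_norm_inner_eq_one_of_forall_abs_le {ι : Type*} {e : ι → V}
    (he : Orthonormal 𝕜 e) {lam : ι → ℝ} {S : Finset ι} (hS : S.Nonempty)
    (hlam0 : ∀ t ∈ S, lam t ≠ 0) (hinj : Set.InjOn lam S) {x : V} (hx : ‖x‖ = 1)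
    (hmax : ∀ u ∈ S, |∑ t ∈ S, lam t * ‖inner 𝕜 (e t) (e u)‖ ^ 2| ≤
      |∑ t ∈ S, lam t * ‖inner 𝕜 (e t) x‖ ^ 2|) :
    ∃ t ∈ S, ‖inner 𝕜 (e t) x‖ = 1 ∧ x = inner 𝕜 (e t) x • e t ∧
      ∑ t' ∈ S, lam t' * ‖inner 𝕜 (e t') x‖ ^ 2 = lam t := by
  have hself : ∀ u ∈ S, ∑ t ∈ S, lam t * ‖inner 𝕜 (e t) (e u)‖ ^ 2 = lam u := fun u hu => by
    rw [sum_eq_single_of_mem u hu fun t _ htu => by simp [he.inner_eq_zero htu],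
      inner_self_eq_norm_sq_to_K, he.1 u]
    simp
  obtain ⟨t, ht, hw, hsum⟩ := exists_weight_eq_one_of_forall_abs_le hS hlam0 hinj
    (fun _ _ => sq_nonneg _) (by simpa [hx] using he.sum_inner_products_le x (s := S))
    (fun u hu => hself u hu ▸ hmax u hu)
  have hnorm := (pow_eq_one_iff_of_nonneg (norm_nonneg _) two_ne_zero).1 hw
  exact ⟨t, ht, hnorm, eq_inner_smul_of_norm_inner_eq_one (he.1 t) hnorm hx, hsum⟩

end InnerProductSpace

noncomputable def flatten {m n 𝕜 : Type*} (X : Matrix m n 𝕜) : EuclideanSpace 𝕜 (m × n) :=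
  WithLp.toLp 2 (Function.uncurry X)

section flatten
variable {m n 𝕜 : Type*}

@[simp]
theorem flatten_apply (X : Matrix m n 𝕜) (p : m × n) : flatten X p = X p.1 p.2 := rfl

theorem flatten_injective : Function.Injective (flatten : Matrix m n 𝕜 → _) :=
  fun _ _ h => funext₂ fun i j => congrArg (· (i, j)) h

variable [RCLike 𝕜]

theorem flatten_smul (c : 𝕜) (X : Matrix m n 𝕜) : flatten (c • X) = c • flatten X := rfl

variable [Fintype m] [Fintype n]

theorem inner_flatten (X Y : Matrix m n 𝕜) :
    inner 𝕜 (flatten X) (flatten Y) = ∑ i, ∑ j, starRingEnd 𝕜 (X i j) * Y i j := by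
  simp [PiLp.inner_apply, Fintype.sum_prod_type, mul_comm]

theorem orthonormal_flatten_iff {ι : Type*} [DecidableEq ι] {E : ι → Matrix m n 𝕜} :
    Orthonormal 𝕜 (fun t => flatten (E t)) ↔
      ∀ s t, ∑ i, ∑ j, E s i j * starRingEnd 𝕜 (E t i j) = if s = t then 1 else 0 := by
  rw [orthonormal_iff_ite, forall_comm]
  refine forall₂_congr fun t s => ?_
  simp only [inner_flatten, mul_comm (starRingEnd 𝕜 _), eq_comm (a := s)]

end flatten

theorem norm_flatten {n : ℕ} (X : Matrix (Fin n) (Fin n) ℂ) : ‖flatten X‖ = mNorm X := by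
  rw [EuclideanSpace.norm_eq, mNorm, Fintype.sum_prod_type]
  rfl

theorem tInner_conjOuter_conjOuter {n : ℕ} (Y X : Matrix (Fin n) (Fin n) ℂ) :
    tInner (conjOuter Y) (conjOuter X) = ((‖inner ℂ (flatten Y) (flatten X)‖ ^ 2 : ℝ) : ℂ) := by
  rw [Complex.ofReal_pow, ← Complex.mul_conj', inner_flatten]
  simp only [map_sum, map_mul, Complex.conj_conj, sum_mul, mul_sum, tInner, conjOuter]
  refine sum_congr rfl fun i _ => sum_congr rfl fun j _ => sum_congr rfl fun k _ =>
    sum_congr rfl fun l _ => by ring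

theorem tInner_sum_smul_left {n : ℕ} {ι : Type*} (S : Finset ι) (c : ι → ℂ)
    (B : ι → Fin n → Fin n → Fin n → Fin n → ℂ) (C : Fin n → Fin n → Fin n → Fin n → ℂ) :
    tInner (∑ t ∈ S, c t • B t) C = ∑ t ∈ S, c t * tInner (B t) C := by
  simp only [tInner, Finset.sum_apply, Pi.smul_apply, smul_eq_mul, sum_mul, mul_sum, mul_assoc]
  conv_rhs =>
    rw [sum_comm]; enter [2, i]; rw [sum_comm]; enter [2, j]; rw [sum_comm]
    enter [2, k]; rw [sum_comm]

noncomputable def cpsTensor {n : ℕ} {ι : Type*} (lam : ι → ℝ) (E : ι → Matrix (Fin n) (Fin n) ℂ)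
    (S : Finset ι) : Fin n → Fin n → Fin n → Fin n → ℂ :=
  ∑ t ∈ S, (lam t : ℂ) • conjOuter (E t)

section cpsTensor
variable {n : ℕ} {ι : Type*} {lam : ι → ℝ} {E : ι → Matrix (Fin n) (Fin n) ℂ} {S : Finset ι}

theorem cpsTensor_apply (i j k l : Fin n) :
    cpsTensor lam E S i j k l = ∑ t ∈ S, (lam t : ℂ) * E t i j * starRingEnd ℂ (E t k l) := by
  simp [cpsTensor, conjOuter, mul_assoc]

theorem cpsTensor_erase [DecidableEq ι] {t : ι} (ht : t ∈ S) :
    cpsTensor lam E (S.erase t) = cpsTensor lam E S - (lam t : ℂ) • conjOuter (E t) := by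
  rw [cpsTensor, cpsTensor, sum_erase_eq_sub ht]

theorem conjOuter_smul_of_norm_eq_one {c : ℂ} (hc : ‖c‖ = 1) (X : Matrix (Fin n) (Fin n) ℂ) :
    conjOuter (c • X) = conjOuter X := by
  have hcc : c * starRingEnd ℂ c = 1 := by rw [Complex.mul_conj', hc]; simp
  funext i j k l
  simp only [conjOuter, Matrix.smul_apply, smul_eq_mul, map_mul]
  linear_combination (X i j * starRingEnd ℂ (X k l)) * hcc

theorem tInner_cpsTensor_conjOuter (X : Matrix (Fin n) (Fin n) ℂ) :
    tInner (cpsTensor lam E S) (conjOuter X) =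
      ((∑ t ∈ S, lam t * ‖inner ℂ (flatten (E t)) (flatten X)‖ ^ 2 : ℝ) : ℂ) := by
  rw [cpsTensor, tInner_sum_smul_left, Complex.ofReal_sum]
  simp [tInner_conjOuter_conjOuter]

theorem exists_eq_smul_of_forall_norm_tInner_le (hE : Orthonormal ℂ (fun t => flatten (E t)))
    (hS : S.Nonempty) (hlam0 : ∀ t ∈ S, lam t ≠ 0) (hinj : Set.InjOn lam S)
    {X : Matrix (Fin n) (Fin n) ℂ} (hX : mNorm X = 1)
    (hmax : ∀ u ∈ S, ‖tInner (cpsTensor lam E S) (conjOuter (E u))‖ ≤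
      ‖tInner (cpsTensor lam E S) (conjOuter X)‖) :
    ∃ t ∈ S, ∃ c : ℂ, ‖c‖ = 1 ∧ tInner (cpsTensor lam E S) (conjOuter X) = lam t ∧
      X = c • E t := by
  simp only [tInner_cpsTensor_conjOuter, Complex.norm_real, Real.norm_eq_abs] at hmax
  obtain ⟨t, ht, hc, hXt, hsum⟩ := hE.exists_norm_inner_eq_one_of_forall_abs_le hS hlam0 hinj
    (x := flatten X) (by rw [norm_flatten, hX]) hmax
  refine ⟨t, ht, _, hc, by rw [tInner_cpsTensor_conjOuter, hsum], flatten_injective ?_⟩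
  rwa [flatten_smul]

end cpsTensor

-- `a s` is the state after `s` greedy steps and `R S` the state in which the indices in `S` remain.
theorem exists_injective_of_forall_exists_erase {ι T : Type*} [DecidableEq ι]
    (R : Finset ι → T) : ∀ {r : ℕ} (a : Fin (r + 1) → T) (P : Fin r → ι → Prop) (S : Finset ι),
    S.card = r → a 0 = R S →
    (∀ s S', a s.castSucc = R S' → S'.Nonempty → ∃ t ∈ S', P s t ∧ a s.succ = R (S'.erase t)) →
    ∃ π : Fin r → ι, Function.Injective π ∧ (∀ s, π s ∈ S ∧ P s (π s)) ∧ a (Fin.last r) = R ∅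
  | 0, a, _, S, hS, ha0, _ =>
    ⟨finZeroElim, fun s => s.elim0, fun s => s.elim0, by rwa [card_eq_zero.1 hS] at ha0⟩
  | r + 1, a, P, S, hS, ha0, hstep => by
    obtain ⟨t, htS, hPt, ha1⟩ := hstep 0 S ha0 (card_pos.1 (by omega))
    obtain ⟨π, hπinj, hπ, hlast⟩ := exists_injective_of_forall_exists_erase R (fun i => a i.succ)
      (fun s => P s.succ) (S.erase t) (by rw [card_erase_of_mem htS, hS]; rfl) ha1
      fun s S' h hne => hstep s.succ S' (by rwa [← Fin.succ_castSucc]) hne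
    refine ⟨Fin.cons t π, Fin.cons_injective_iff.2 ⟨?_, hπinj⟩,
      Fin.cases ⟨htS, hPt⟩ fun s => ⟨mem_of_mem_erase (hπ s).1, (hπ s).2⟩, hlast⟩
    rintro ⟨s, hs⟩
    exact notMem_erase t S (hs ▸ (hπ s).1)

theorem smroa_exact_recovery_general {n r : ℕ}
    (lam : Fin r → ℝ) (E : Fin r → Matrix (Fin n) (Fin n) ℂ)
    (hlam0 : ∀ t, lam t ≠ 0) (hlaminj : Function.Injective lam)
    (hEsym : ∀ t, (E t).IsSymm)
    (hEorth : ∀ s t, (∑ i, ∑ j, E s i j * starRingEnd ℂ (E t i j)) =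
      if s = t then 1 else 0)
    (A : Fin (r + 1) → Fin n → Fin n → Fin n → Fin n → ℂ)
    (hA0 : ∀ i j k l, A 0 i j k l =
      ∑ t, (lam t : ℂ) * E t i j * starRingEnd ℂ (E t k l))
    (Xhat : Fin r → Matrix (Fin n) (Fin n) ℂ) (lamHat : Fin r → ℂ)
    (hXnorm : ∀ s, mNorm (Xhat s) = 1)
    (hXmax : ∀ s, ∀ X : Matrix (Fin n) (Fin n) ℂ, X.IsSymm → mNorm X = 1 →
      ‖tInner (A s.castSucc) (conjOuter X)‖ ≤
        ‖tInner (A s.castSucc) (conjOuter (Xhat s))‖)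
    (hlamHat : ∀ s, lamHat s = tInner (A s.castSucc) (conjOuter (Xhat s)))
    (hrec : ∀ s : Fin r, ∀ i j k l, A s.succ i j k l =
      A s.castSucc i j k l - lamHat s * (Xhat s i j * starRingEnd ℂ (Xhat s k l))) :
    ∃ (π : Equiv.Perm (Fin r)) (c : Fin r → ℂ),
      (∀ s, ‖c s‖ = 1 ∧ lamHat s = (lam (π s) : ℂ) ∧
        Xhat s = c s • E (π s)) ∧
      A (Fin.last r) = 0 := by
  have hE : Orthonormal ℂ (fun t => flatten (E t)) := orthonormal_flatten_iff.2 hEorth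
  have hstart : A 0 = cpsTensor lam E univ := by
    funext i j k l
    rw [hA0, cpsTensor_apply]
  have hstep : ∀ s S, A s.castSucc = cpsTensor lam E S → S.Nonempty → ∃ t ∈ S,
      (∃ c : ℂ, ‖c‖ = 1 ∧ lamHat s = lam t ∧ Xhat s = c • E t) ∧
        A s.succ = cpsTensor lam E (S.erase t) := by
    intro s S hA hS
    obtain ⟨t, ht, c, hc, hval, hX⟩ := exists_eq_smul_of_forall_norm_tInner_le hE hS
      (fun t _ => hlam0 t) hlaminj.injOn (hXnorm s) fun u _ => by
        simpa only [hA] using hXmax s (E u) (hEsym u) (by rw [← norm_flatten, hE.1 u])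
    have hlamt : lamHat s = lam t := by rw [hlamHat, hA, hval]
    refine ⟨t, ht, ⟨c, hc, hlamt, hX⟩, ?_⟩
    have hdefl : A s.succ = A s.castSucc - lamHat s • conjOuter (Xhat s) :=
      funext fun i => funext fun j => funext fun k => funext fun l => hrec s i j k l
    rw [hdefl, hA, hlamt, hX, conjOuter_smul_of_norm_eq_one hc, cpsTensor_erase ht]
  obtain ⟨π, hπinj, hπ, hlast⟩ := exists_injective_of_forall_exists_erase (cpsTensor lam E) A
    _ univ (card_fin r) hstart hstep
  choose c hc using fun s => (hπ s).2
  exact ⟨Equiv.ofBijective π (Finite.injective_iff_bijective.1 hπinj), c, hc, by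
    simpa [cpsTensor] using hlast⟩

/-- The SMROA algorithm exactly recovers the orthonormal matrix outer product
decomposition of a CPS tensor, up to a permutation and unimodular factors. -/
theorem smroa_exact_recovery {n r : ℕ}
    (lam : Fin r → ℝ) (E : Fin r → Matrix (Fin n) (Fin n) ℂ)
    (hlam0 : ∀ t, lam t ≠ 0) (hlaminj : Function.Injective lam)
    (hEsym : ∀ t, (E t).IsSymm)
    (hEorth : ∀ s t, (∑ i, ∑ j, E s i j * starRingEnd ℂ (E t i j)) =
      if s = t then 1 else 0)
    (A : Fin (r + 1) → Fin n → Fin n → Fin n → Fin n → ℂ)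
    (hA0 : ∀ i j k l, A 0 i j k l =
      ∑ t, (lam t : ℂ) * E t i j * starRingEnd ℂ (E t k l))
    (Xhat : Fin r → Matrix (Fin n) (Fin n) ℂ) (lamHat : Fin r → ℂ)
    (hXsym : ∀ s, (Xhat s).IsSymm) (hXnorm : ∀ s, mNorm (Xhat s) = 1)
    (hXmax : ∀ s, ∀ X : Matrix (Fin n) (Fin n) ℂ, X.IsSymm → mNorm X = 1 →
      ‖tInner (A s.castSucc) (conjOuter X)‖ ≤
        ‖tInner (A s.castSucc) (conjOuter (Xhat s))‖)
    (hlamHat : ∀ s, lamHat s = tInner (A s.castSucc) (conjOuter (Xhat s)))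
    (hrec : ∀ s : Fin r, ∀ i j k l, A s.succ i j k l =
      A s.castSucc i j k l - lamHat s * (Xhat s i j * starRingEnd ℂ (Xhat s k l))) :
    ∃ (π : Equiv.Perm (Fin r)) (c : Fin r → ℂ),
      (∀ s, ‖c s‖ = 1 ∧ lamHat s = (lam (π s) : ℂ) ∧
        Xhat s = c s • E (π s)) ∧
      A (Fin.last r) = 0 :=
  smroa_exact_recovery_general lam E hlam0 hlaminj hEsym hEorth A hA0 Xhat lamHat hXnorm hXmax
    hlamHat hrec
end

section
/- Let A ∈ ℂ^{n×n×n×n} be a CPS tensor with rank_M(A) = m, and let A = Σ_{i=1}^m λ_i E_i∘conj(E_i) be a decomposition attaining this minimum, with λ_i ∈ ℝ and E_i ∈ ℂ^{n×n} symmetric. Set r = max_{1≤i≤m} rank(E_i). Then rank_M(A) ≤ rank_CP(A) ≤ r²·rank_M(A). -/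
/-!
Flatten `A` to the `n² × n²` matrix `M (i, j) (k, l) = A i j k l`. Conjugate partial symmetry
makes `M` Hermitian with rows invariant under `(i, j) ↦ (j, i)`. A CP decomposition of length `R`
factors `M` through `ℂ^R`, so `rank M ≤ R`. The spectral decomposition of `M` over its nonzero
eigenvalues is an M-decomposition with `rank M` terms: an eigenvector `v` with eigenvalue `μ ≠ 0`
equals `μ⁻¹ M v`, so it inherits the row symmetry and is a symmetric matrix. Conversely, writing
each `E_t` as a sum of `rank E_t ≤ r` outer products `u vᵀ` and expanding `E_t ∘ conj(E_t)` gives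
a CP decomposition with at most `r²` terms per summand.
-/

open scoped BigOperators

/-- `rank_M(A)`: the smallest length of a decomposition
`A = Σ λ_t E_t ∘ conj(E_t)` with real `λ_t` and symmetric matrices `E_t`. -/
noncomputable def rankM {n : ℕ} (A : Fin n → Fin n → Fin n → Fin n → ℂ) : ℕ :=
  sInf {r : ℕ | ∃ (lam : Fin r → ℝ) (E : Fin r → Matrix (Fin n) (Fin n) ℂ),
    (∀ t, (E t).IsSymm) ∧
    ∀ i j k l, A i j k l =
      ∑ t, (lam t : ℂ) * E t i j * starRingEnd ℂ (E t k l)}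

/-- The CP rank of a fourth-order complex tensor. -/
noncomputable def rankCP {n : ℕ} (A : Fin n → Fin n → Fin n → Fin n → ℂ) : ℕ :=
  sInf {R : ℕ | ∃ a b c d : Fin R → Fin n → ℂ,
    ∀ i j k l, A i j k l = ∑ t, a t i * b t j * c t k * d t l}

namespace Matrix

theorem exists_eq_sum_vecMulVec {m n K : Type*} [Fintype n] [Field K] (B : Matrix m n K) :
    ∃ (u : Fin B.rank → m → K) (v : Fin B.rank → n → K), B = ∑ s, vecMulVec (u s) (v s) := by
  let V := Submodule.span K (Set.range B.col)
  have hV : Module.finrank K V = B.rank := (rank_eq_finrank_span_cols B).symm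
  have : Module.Finite K V := .span_of_finite K (Set.finite_range _)
  let b := (Module.finBasis K V).reindex (finCongr hV)
  let col (j : n) : V := ⟨B.col j, Submodule.subset_span ⟨j, rfl⟩⟩
  refine ⟨fun s => b s, fun s j => b.repr (col j) s, ?_⟩
  ext i j
  have hcol := congrArg (fun w : V => (w : m → K) i) (b.sum_repr (col j))
  simp only [Submodule.coe_sum, Submodule.coe_smul, Finset.sum_apply, Pi.smul_apply,
    smul_eq_mul] at hcol
  simp only [sum_apply, vecMulVec_apply]
  rw [show B i j = (col j : m → K) i from rfl, ← hcol]
  exact Finset.sum_congr rfl fun s _ => mul_comm _ _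

theorem comp_eq_of_mulVec_eq_smul_s9 {ι K : Type*} [Fintype ι] [Field K] {M : Matrix ι ι K}
    {σ : ι → ι} (hσ : ∀ p, M (σ p) = M p) {v : ι → K} {μ : K} (hμ : μ ≠ 0)
    (hv : M *ᵥ v = μ • v) : v ∘ σ = v := by
  funext p
  have h := congrFun hv (σ p)
  rw [mulVec, hσ, ← mulVec, hv] at h
  simpa [hμ] using h.symm

theorem IsHermitian.apply_eq_sum_eigenvalues {ι 𝕜 : Type*} [Fintype ι] [DecidableEq ι] [RCLike 𝕜]
    {M : Matrix ι ι 𝕜} (hM : M.IsHermitian) (p q : ι) :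
    M p q = ∑ i, (hM.eigenvalues i : 𝕜) * hM.eigenvectorBasis i p *
      star (hM.eigenvectorBasis i q) := by
  conv_lhs => rw [hM.spectral_theorem, Unitary.conjStarAlgAut_apply]
  rw [mul_apply]
  simp only [mul_diagonal, star_apply, IsHermitian.eigenvectorUnitary_apply,
    Function.comp_apply]
  exact Finset.sum_congr rfl fun i _ => by ring

end Matrix

open Matrix

section

variable {n : ℕ}

def squareUnfolding (A : Fin n → Fin n → Fin n → Fin n → ℂ) :
    Matrix (Fin n × Fin n) (Fin n × Fin n) ℂ :=
  of fun p q => A p.1 p.2 q.1 q.2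

theorem IsCPS.isHermitian_squareUnfolding {A : Fin n → Fin n → Fin n → Fin n → ℂ}
    (hA : IsCPS A) : (squareUnfolding A).IsHermitian := by
  ext p q
  simp [squareUnfolding, (hA q.1 q.2 p.1 p.2).2.2]

theorem IsCPS.squareUnfolding_row_swap {A : Fin n → Fin n → Fin n → Fin n → ℂ}
    (hA : IsCPS A) (p : Fin n × Fin n) : squareUnfolding A p.swap = squareUnfolding A p := by
  funext q
  exact (hA p.1 p.2 q.1 q.2).1.symm

theorem rankM_le_card {ι : Type*} [Fintype ι] {A : Fin n → Fin n → Fin n → Fin n → ℂ}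
    (lam : ι → ℝ) (E : ι → Matrix (Fin n) (Fin n) ℂ) (hE : ∀ t, (E t).IsSymm)
    (hA : ∀ i j k l, A i j k l = ∑ t, (lam t : ℂ) * E t i j * starRingEnd ℂ (E t k l)) :
    rankM A ≤ Fintype.card ι := by
  let e := Fintype.equivFin ι
  refine Nat.sInf_le ⟨lam ∘ e.symm, E ∘ e.symm, fun t => hE _, fun i j k l => ?_⟩
  rw [hA]
  exact (e.symm.sum_comp fun t => (lam t : ℂ) * E t i j * starRingEnd ℂ (E t k l)).symm

theorem exists_cp_fin_of_cp {ι : Type*} [Fintype ι] {A : Fin n → Fin n → Fin n → Fin n → ℂ}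
    (a b c d : ι → Fin n → ℂ)
    (hA : ∀ i j k l, A i j k l = ∑ t, a t i * b t j * c t k * d t l) :
    ∃ a b c d : Fin (Fintype.card ι) → Fin n → ℂ,
      ∀ i j k l, A i j k l = ∑ t, a t i * b t j * c t k * d t l := by
  let e := Fintype.equivFin ι
  refine ⟨a ∘ e.symm, b ∘ e.symm, c ∘ e.symm, d ∘ e.symm, fun i j k l => ?_⟩
  rw [hA]
  exact (e.symm.sum_comp fun t => a t i * b t j * c t k * d t l).symm

theorem rankCP_le_card {ι : Type*} [Fintype ι] {A : Fin n → Fin n → Fin n → Fin n → ℂ}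
    (a b c d : ι → Fin n → ℂ)
    (hA : ∀ i j k l, A i j k l = ∑ t, a t i * b t j * c t k * d t l) :
    rankCP A ≤ Fintype.card ι :=
  Nat.sInf_le (exists_cp_fin_of_cp a b c d hA)

theorem exists_cp_rankCP (A : Fin n → Fin n → Fin n → Fin n → ℂ) :
    ∃ a b c d : Fin (rankCP A) → Fin n → ℂ,
      ∀ i j k l, A i j k l = ∑ t, a t i * b t j * c t k * d t l := by
  -- `A = ∑ e_i ∘ e_j ∘ e_k ∘ A i j k ·` makes the set nonempty, so its `sInf` is a member
  have h := exists_cp_fin_of_cp (A := A) (ι := Fin n × Fin n × Fin n)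
    (fun x => Pi.single x.1 1) (fun x => Pi.single x.2.1 1) (fun x => Pi.single x.2.2 1)
    (fun x => A x.1 x.2.1 x.2.2) fun i j k l => by simp [Fintype.sum_prod_type, Pi.single_apply]
  exact Nat.sInf_mem (s := {R | ∃ a b c d : Fin R → Fin n → ℂ,
    ∀ i j k l, A i j k l = ∑ t, a t i * b t j * c t k * d t l}) ⟨_, h⟩

theorem rank_squareUnfolding_le_rankCP (A : Fin n → Fin n → Fin n → Fin n → ℂ) :
    (squareUnfolding A).rank ≤ rankCP A := by
  obtain ⟨a, b, c, d, hA⟩ := exists_cp_rankCP A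
  have hfac : squareUnfolding A =
      (of fun (p : Fin n × Fin n) t => a t p.1 * b t p.2) *
        of fun t (q : Fin n × Fin n) => c t q.1 * d t q.2 := by
    ext p q
    simp only [squareUnfolding, of_apply, mul_apply, hA, mul_assoc]
  rw [hfac]
  exact (rank_mul_le_left _ _).trans ((rank_le_card_width _).trans_eq (Fintype.card_fin _))

theorem rankM_le_rank_squareUnfolding {A : Fin n → Fin n → Fin n → Fin n → ℂ} (hA : IsCPS A) :
    rankM A ≤ (squareUnfolding A).rank := by
  have hM := hA.isHermitian_squareUnfolding
  let u (x : {i // hM.eigenvalues i ≠ 0}) : Fin n × Fin n → ℂ := hM.eigenvectorBasis x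
  rw [hM.rank_eq_card_non_zero_eigs]
  refine rankM_le_card (fun x => hM.eigenvalues x) (fun x => of fun j k => u x (j, k))
    (fun x => ?_) fun i j k l => ?_
  · have hsym := comp_eq_of_mulVec_eq_smul_s9 hA.squareUnfolding_row_swap
      (RCLike.ofReal_ne_zero.2 x.2) (hM.mulVec_eigenvectorBasis x)
    ext j k
    simpa [u] using (congrFun hsym (k, j)).symm
  · calc A i j k l = ∑ y, (hM.eigenvalues y : ℂ) * hM.eigenvectorBasis y (i, j) *
          star (hM.eigenvectorBasis y (k, l)) := hM.apply_eq_sum_eigenvalues (i, j) (k, l)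
      _ = ∑ y with hM.eigenvalues y ≠ 0, (hM.eigenvalues y : ℂ) *
          hM.eigenvectorBasis y (i, j) * star (hM.eigenvectorBasis y (k, l)) :=
        (Finset.sum_filter_of_ne fun y _ h => by
          simpa using left_ne_zero_of_mul (left_ne_zero_of_mul h)).symm
      _ = _ := Finset.sum_subtype _ (by simp) _

theorem rankCP_le_sum_rank_sq {ι : Type*} [Fintype ι] {A : Fin n → Fin n → Fin n → Fin n → ℂ}
    (lam : ι → ℝ) (E : ι → Matrix (Fin n) (Fin n) ℂ)
    (hA : ∀ i j k l, A i j k l = ∑ t, (lam t : ℂ) * E t i j * starRingEnd ℂ (E t k l)) :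
    rankCP A ≤ ∑ t, (E t).rank ^ 2 := by
  choose u v huv using fun t => (E t).exists_eq_sum_vecMulVec
  have hE (t : ι) (i j : Fin n) : E t i j = ∑ p, u t p i * v t p j := by
    simpa [Matrix.sum_apply, vecMulVec_apply] using congrFun (congrFun (huv t) i) j
  refine (rankCP_le_card (ι := Σ t, Fin (E t).rank × Fin (E t).rank)
    (fun x => (lam x.1 : ℂ) • u x.1 x.2.1) (fun x => v x.1 x.2.1)
    (fun x => star (u x.1 x.2.2)) (fun x => star (v x.1 x.2.2)) fun i j k l => ?_).trans_eq ?_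
  · rw [hA, Fintype.sum_sigma]
    refine Finset.sum_congr rfl fun t _ => ?_
    simp only [hE t, map_sum, map_mul, Fintype.sum_prod_type, Finset.mul_sum, Finset.sum_mul]
    rw [Finset.sum_comm]
    refine Finset.sum_congr rfl fun p _ => Finset.sum_congr rfl fun q _ => ?_
    simp only [Pi.smul_apply, Pi.star_apply, smul_eq_mul, Complex.star_def]
    ring
  · simp [sq]

end

theorem rankM_le_rankCP_le_general {n m : ℕ}
    (A : Fin n → Fin n → Fin n → Fin n → ℂ) (hA : IsCPS A)
    (lam : Fin m → ℝ) (E : Fin m → Matrix (Fin n) (Fin n) ℂ)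
    (hdec : ∀ i j k l, A i j k l =
      ∑ t, (lam t : ℂ) * E t i j * starRingEnd ℂ (E t k l))
    (hmin : rankM A = m)
    (r : ℕ) (hr : r = Finset.univ.sup fun t => (E t).rank) :
    rankM A ≤ rankCP A ∧ rankCP A ≤ r ^ 2 * rankM A := by
  refine ⟨(rankM_le_rank_squareUnfolding hA).trans (rank_squareUnfolding_le_rankCP A), ?_⟩
  have hrank (t : Fin m) : (E t).rank ≤ r :=
    hr ▸ Finset.le_sup (f := fun t => (E t).rank) (Finset.mem_univ t)
  calc rankCP A ≤ ∑ t, (E t).rank ^ 2 := rankCP_le_sum_rank_sq lam E hdec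
    _ ≤ ∑ _t : Fin m, r ^ 2 := Finset.sum_le_sum fun t _ => Nat.pow_le_pow_left (hrank t) 2
    _ = r ^ 2 * rankM A := by simp [hmin, mul_comm]

/-- `rank_M(A) ≤ rank_CP(A) ≤ r² rank_M(A)`, where `r` is the maximal matrix
rank of the factors in a minimal matrix outer product decomposition of `A`. -/
theorem rankM_le_rankCP_le {n m : ℕ}
    (A : Fin n → Fin n → Fin n → Fin n → ℂ) (hA : IsCPS A)
    (lam : Fin m → ℝ) (E : Fin m → Matrix (Fin n) (Fin n) ℂ)
    (hEsym : ∀ t, (E t).IsSymm)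
    (hdec : ∀ i j k l, A i j k l =
      ∑ t, (lam t : ℂ) * E t i j * starRingEnd ℂ (E t k l))
    (hmin : rankM A = m)
    (r : ℕ) (hr : r = Finset.univ.sup fun t => (E t).rank) :
    rankM A ≤ rankCP A ∧ rankCP A ≤ r ^ 2 * rankM A :=
  rankM_le_rankCP_le_general A hA lam E hdec hmin r hr
end

section
/- Let A ∈ ℂ^{n×n×n×n} be a CPS tensor. Then rank_M(A) equals the matrix rank of the square unfolding M(A), i.e., the smallest r such that A = Σ_{i=1}^r λ_i E_i∘conj(E_i) with λ_i ∈ ℝ and E_i ∈ ℂ^{n×n} symmetric equals rank(M(A)). -/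
open scoped BigOperators

/-- The square unfolding `M(A)` of a fourth-order tensor: the entry in the row
indexed by `(i,j)` and the column indexed by `(k,l)` is `A_{ijkl}`. -/
def squareUnfold {n : ℕ} (A : Fin n → Fin n → Fin n → Fin n → ℂ) :
    Matrix (Fin n × Fin n) (Fin n × Fin n) ℂ :=
  fun p q => A p.1 p.2 q.1 q.2

/-!
Any decomposition `A = Σ_{t<r} λ_t E_t ∘ conj(E_t)` factors `M(A)` through `ℂ^r`, so
`rank M(A) ≤ r`. Conversely, `M(A)` is Hermitian, and its spectral decomposition restricted to
the `rank M(A)` nonzero eigenvalues is such a decomposition: an eigenvector `v` for an eigenvalue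
`λ ≠ 0` is `λ⁻¹ M(A) v`, and the rows of `M(A)` are invariant under `(i,j) ↦ (j,i)`, so `v`,
read as an `n × n` matrix, is symmetric.
-/

namespace Matrix

lemma apply_comp_eq_of_mulVec_eq_smul {m K : Type*} [Fintype m] [Semiring K]
    [IsLeftCancelMulZero K] {H : Matrix m m K} {σ : m → m} (hσ : ∀ p q, H (σ p) q = H p q)
    {μ : K} (hμ : μ ≠ 0) {v : m → K} (hv : H *ᵥ v = μ • v) (p : m) : v (σ p) = v p := by
  have h : (H *ᵥ v) (σ p) = (H *ᵥ v) p := by simp only [mulVec, dotProduct, hσ]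
  rw [hv] at h
  exact mul_left_cancel₀ hμ h

variable {m 𝕜 : Type*} [Fintype m] [DecidableEq m] [RCLike 𝕜] {H : Matrix m m 𝕜}

lemma IsHermitian.apply_eq_sum_eigenvalues_s10 (hH : H.IsHermitian) (p q : m) :
    H p q = ∑ x, (hH.eigenvalues x : 𝕜) * hH.eigenvectorBasis x p *
      starRingEnd 𝕜 (hH.eigenvectorBasis x q) := by
  conv_lhs => rw [hH.spectral_theorem]
  rw [Unitary.conjStarAlgAut_apply, mul_apply]
  refine Finset.sum_congr rfl fun x _ => ?_
  rw [mul_diagonal, star_apply]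
  simp only [IsHermitian.eigenvectorUnitary_apply, Function.comp_apply, RCLike.star_def]
  ring

lemma IsHermitian.exists_eigendecomposition_fin_rank (hH : H.IsHermitian) :
    ∃ (lam : Fin H.rank → ℝ) (v : Fin H.rank → m → 𝕜), (∀ t, lam t ≠ 0) ∧
      (∀ t, H *ᵥ v t = (lam t : 𝕜) • v t) ∧
      ∀ p q, H p q = ∑ t, (lam t : 𝕜) * v t p * starRingEnd 𝕜 (v t q) := by
  let e : Fin H.rank ≃ {x // hH.eigenvalues x ≠ 0} :=
    (Fintype.equivFinOfCardEq hH.rank_eq_card_non_zero_eigs.symm).symm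
  refine ⟨fun t => hH.eigenvalues (e t), fun t => hH.eigenvectorBasis (e t), fun t => (e t).2,
    fun t => by rw [hH.mulVec_eigenvectorBasis, RCLike.real_smul_eq_coe_smul (K := 𝕜)],
    fun p q => ?_⟩
  set f : m → 𝕜 := fun x => (hH.eigenvalues x : 𝕜) * hH.eigenvectorBasis x p *
    starRingEnd 𝕜 (hH.eigenvectorBasis x q)
  calc H p q = ∑ x, f x := hH.apply_eq_sum_eigenvalues_s10 p q
    _ = ∑ x ∈ Finset.univ.filter (fun x => hH.eigenvalues x ≠ 0), f x :=
      (Finset.sum_filter_of_ne fun x _ hfx => by contrapose! hfx; simp [f, hfx]).symm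
    _ = ∑ s : {x // hH.eigenvalues x ≠ 0}, f s := Finset.sum_subtype _ (by simp) f
    _ = ∑ t, f (e t) := (e.sum_comp _).symm

end Matrix

section CPS

variable {n : ℕ} {A : Fin n → Fin n → Fin n → Fin n → ℂ}

lemma IsCPS.squareUnfold_isHermitian (hA : IsCPS A) : (squareUnfold A).IsHermitian := by
  ext p q
  exact (hA p.1 p.2 q.1 q.2).2.2.symm

lemma IsCPS.squareUnfold_swap_apply (hA : IsCPS A) (p q : Fin n × Fin n) :
    squareUnfold A p.swap q = squareUnfold A p q :=
  (hA p.1 p.2 q.1 q.2).1.symm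

lemma rank_squareUnfold_le {r : ℕ} (lam : Fin r → ℝ) (E : Fin r → Matrix (Fin n) (Fin n) ℂ)
    (hdec : ∀ i j k l, A i j k l = ∑ t, (lam t : ℂ) * E t i j * starRingEnd ℂ (E t k l)) :
    (squareUnfold A).rank ≤ r := by
  let B : Matrix (Fin n × Fin n) (Fin r) ℂ := Matrix.of fun p t => (lam t : ℂ) * E t p.1 p.2
  let C : Matrix (Fin r) (Fin n × Fin n) ℂ := Matrix.of fun t q => starRingEnd ℂ (E t q.1 q.2)
  have hfac : squareUnfold A = B * C := by
    ext p q
    exact hdec p.1 p.2 q.1 q.2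
  calc (squareUnfold A).rank = (B * C).rank := by rw [hfac]
    _ ≤ B.rank := Matrix.rank_mul_le_left B C
    _ ≤ r := (Matrix.rank_le_card_width B).trans_eq (Fintype.card_fin r)

lemma IsCPS.exists_symm_decomposition (hA : IsCPS A) :
    ∃ (lam : Fin (squareUnfold A).rank → ℝ)
      (E : Fin (squareUnfold A).rank → Matrix (Fin n) (Fin n) ℂ), (∀ t, (E t).IsSymm) ∧
      ∀ i j k l, A i j k l = ∑ t, (lam t : ℂ) * E t i j * starRingEnd ℂ (E t k l) := by
  obtain ⟨lam, v, hlam, hv, hdec⟩ := hA.squareUnfold_isHermitian.exists_eigendecomposition_fin_rank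
  refine ⟨lam, fun t => Matrix.of fun i j => v t (i, j), fun t => ?_,
    fun i j k l => hdec (i, j) (k, l)⟩
  ext i j
  exact Matrix.apply_comp_eq_of_mulVec_eq_smul hA.squareUnfold_swap_apply
    (Complex.ofReal_ne_zero.mpr (hlam t)) (hv t) (i, j)

end CPS

/-- For a CPS tensor, `rank_M(A)` equals the matrix rank of the square
unfolding `M(A)`. -/
theorem rankM_eq_rank_squareUnfold {n : ℕ}
    (A : Fin n → Fin n → Fin n → Fin n → ℂ) (hA : IsCPS A) :
    rankM A = (squareUnfold A).rank := by
  refine le_antisymm (Nat.sInf_le hA.exists_symm_decomposition)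
    (le_csInf ⟨_, hA.exists_symm_decomposition⟩ ?_)
  rintro r ⟨lam, E, -, hdec⟩
  exact rank_squareUnfold_le lam E hdec
end

section
/- Let T ∈ ℂ^{n×n×n×n} be a CPS tensor that is rank-one, i.e., T = a∘b∘w∘z for some vectors a,b,w,z ∈ ℂ^n. Then there exist λ ∈ ℝ and x ∈ ℂ^n such that T = λ·x∘x∘conj(x)∘conj(x). -/
open scoped BigOperators

/-- A rank-one CPS tensor has the form `λ x ∘ x ∘ conj(x) ∘ conj(x)` with
`λ` real. -/
theorem cps_rank_one_form {n : ℕ}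
    (T : Fin n → Fin n → Fin n → Fin n → ℂ) (hT : IsCPS T)
    (a b w z : Fin n → ℂ)
    (hrank1 : ∀ i j k l, T i j k l = a i * b j * w k * z l) :
    ∃ (lam : ℝ) (x : Fin n → ℂ), ∀ i j k l,
      T i j k l = (lam : ℂ) * x i * x j *
        starRingEnd ℂ (x k) * starRingEnd ℂ (x l) := by
  by_cases h0 : ∀ i j k l, T i j k l = 0
  · exact ⟨0, fun _ => 0, fun i j k l => by simp [h0]⟩
  push_neg at h0
  obtain ⟨p, q, r, s, hpq⟩ := h0
  have hfac : a p * b q * w r * z s ≠ 0 := by rw [← hrank1]; exact hpq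
  have hap : a p ≠ 0 := fun h => hfac (by simp [h])
  have hbq : b q ≠ 0 := fun h => hfac (by simp [h])
  have hwr : w r ≠ 0 := fun h => hfac (by simp [h])
  have hzs : z s ≠ 0 := fun h => hfac (by simp [h])
  have hsym1 : ∀ i j, a i * b j = a j * b i := by
    intro i j
    have h := (hT i j r s).1
    rw [hrank1, hrank1] at h
    exact mul_right_cancel₀ hwr (mul_right_cancel₀ hzs h)
  have hsym2 : ∀ k l, w k * z l = w l * z k := by
    intro k l
    have h := (hT p q k l).2.1
    rw [hrank1, hrank1] at h
    have h' : (a p * b q) * (w k * z l) = (a p * b q) * (w l * z k) := by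
      linear_combination h
    exact mul_left_cancel₀ (mul_ne_zero hap hbq) h'
  have haq : a q ≠ 0 := by
    intro h
    apply hbq
    have := hsym1 p q
    rw [h, zero_mul] at this
    exact (mul_eq_zero.mp this).resolve_left hap
  have hws : w s ≠ 0 := by
    intro h
    apply hzs
    have := hsym2 r s
    rw [h, zero_mul] at this
    exact (mul_eq_zero.mp this).resolve_left hwr
  set C : ℂ := (b q / a q) * (z s / w s) with hCdef
  have hC : C ≠ 0 := mul_ne_zero (div_ne_zero hbq haq) (div_ne_zero hzs hws)
  have hb : ∀ j, b j = a j * (b q / a q) := by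
    intro j
    field_simp
    linear_combination hsym1 q j
  have hz : ∀ l, z l = w l * (z s / w s) := by
    intro l
    field_simp
    linear_combination hsym2 s l
  have hrep : ∀ i j k l, T i j k l = C * (a i * a j * (w k * w l)) := by
    intro i j k l
    rw [hrank1, hb j, hz l, hCdef]
    ring
  have hconj : ∀ i j k l, C * (a i * a j * (w k * w l)) =
      starRingEnd ℂ C * (starRingEnd ℂ (w i) * starRingEnd ℂ (w j) *
        (starRingEnd ℂ (a k) * starRingEnd ℂ (a l))) := by
    intro i j k l
    have h := (hT i j k l).2.2
    rw [hrep, hrep] at h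
    simpa [map_mul, mul_comm, mul_left_comm, mul_assoc] using h
  have hwp : w p ≠ 0 := by
    intro h
    have h1 := hconj p p r r
    rw [h] at h1
    simp at h1
    rcases h1 with h1 | h1 | h1
    exacts [hC h1, hap h1, hwr h1]
  have har : a r ≠ 0 := by
    intro h
    have h1 := hconj p p r r
    rw [h] at h1
    simp at h1
    rcases h1 with h1 | h1 | h1
    exacts [hC h1, hap h1, hwr h1]
  set e : ℂ := (C * (a p * (w r * w r))) /
      (starRingEnd ℂ C * (starRingEnd ℂ (w p) *
        (starRingEnd ℂ (a r) * starRingEnd ℂ (a r)))) with hedef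
  have hden : starRingEnd ℂ C * (starRingEnd ℂ (w p) *
      (starRingEnd ℂ (a r) * starRingEnd ℂ (a r))) ≠ 0 := by
    refine mul_ne_zero ?_ (mul_ne_zero ?_ (mul_ne_zero ?_ ?_)) <;>
      simpa using ‹_›
  have hw : ∀ i, starRingEnd ℂ (w i) = e * a i := by
    intro i
    have h := hconj i p r r
    rw [hedef, div_mul_eq_mul_div, eq_div_iff hden]
    linear_combination -h
  set K : ℂ := C * (starRingEnd ℂ e * starRingEnd ℂ e) with hKdef
  have hrep2 : ∀ i j k l, T i j k l =
      K * (a i * a j * (starRingEnd ℂ (a k) * starRingEnd ℂ (a l))) := by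
    intro i j k l
    have hk : w k = starRingEnd ℂ e * starRingEnd ℂ (a k) := by
      have := congrArg (starRingEnd ℂ) (hw k)
      simpa [map_mul] using this
    have hl : w l = starRingEnd ℂ e * starRingEnd ℂ (a l) := by
      have := congrArg (starRingEnd ℂ) (hw l)
      simpa [map_mul] using this
    rw [hrep, hk, hl, hKdef]
    ring
  have hKreal : K = starRingEnd ℂ K := by
    have h := (hT p p r r).2.2
    rw [hrep2, hrep2] at h
    simp only [map_mul, RingHom.id_apply, Complex.conj_conj] at h
    have h' : (a p * a p * (starRingEnd ℂ (a r) * starRingEnd ℂ (a r))) * K =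
        (a p * a p * (starRingEnd ℂ (a r) * starRingEnd ℂ (a r))) *
          starRingEnd ℂ K := by
      linear_combination h
    refine mul_left_cancel₀ ?_ h'
    refine mul_ne_zero (mul_ne_zero hap hap) (mul_ne_zero ?_ ?_) <;>
      simpa using har
  have hKre : (K.re : ℂ) = K := Complex.conj_eq_iff_re.mp hKreal.symm
  refine ⟨K.re, a, fun i j k l => ?_⟩
  rw [hrep2 i j k l, hKre]
  ring
end

section
/- Let T ∈ ℂ^{n×n×n×n} be a CPS tensor such that the unfolding matrix T_{[3,2;1,4]} has matrix rank one. Then T is a rank-one tensor; moreover T = λ·x∘x∘conj(x)∘conj(x) for some λ ∈ ℝ and x ∈ ℂ^n. -/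
open scoped BigOperators

/-- The unfolding `T_{[3,2;1,4]}`: the entry in the row indexed by `(k,j)` and
the column indexed by `(i,l)` is `T_{ijkl}`. -/
def unfold3214 {n : ℕ} (T : Fin n → Fin n → Fin n → Fin n → ℂ) :
    Matrix (Fin n × Fin n) (Fin n × Fin n) ℂ :=
  fun p q => T q.1 p.2 p.1 q.2

lemma rank_one_factor {m : Type*} [Fintype m] [DecidableEq m] (M : Matrix m m ℂ)
    (h : M.rank = 1) : ∃ u v : m → ℂ, ∀ p q, M p q = u p * v q := by
  rw [Matrix.rank] at h
  obtain ⟨w, -, hw⟩ := (finrank_eq_one_iff' ).mp h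
  choose c hc using hw
  refine ⟨(w : m → ℂ), fun q => c ⟨M.mulVec (Pi.single q 1), ⟨Pi.single q 1, rfl⟩⟩, ?_⟩
  intro p q
  have := hc ⟨M.mulVec (Pi.single q 1), ⟨Pi.single q 1, rfl⟩⟩
  have h2 := congrArg (fun z : LinearMap.range (Matrix.mulVecLin M) => (z : m → ℂ) p) this
  simp only [Submodule.coe_smul, Pi.smul_apply, smul_eq_mul] at h2
  rw [mul_comm, h2]
  simp [Matrix.mulVec, dotProduct, Pi.single_apply]

/-- If the unfolding `T_{[3,2;1,4]}` of a CPS tensor `T` has matrix rank one,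
then `T` is a rank-one tensor, of the form `λ x ∘ x ∘ conj(x) ∘ conj(x)`. -/
theorem cps_rank_one_of_unfold_rank_one {n : ℕ}
    (T : Fin n → Fin n → Fin n → Fin n → ℂ) (hT : IsCPS T)
    (hrank : (unfold3214 T).rank = 1) :
    (∃ a b c d : Fin n → ℂ, ∀ i j k l, T i j k l = a i * b j * c k * d l) ∧
    ∃ (lam : ℝ) (x : Fin n → ℂ), ∀ i j k l,
      T i j k l = (lam : ℂ) * x i * x j *
        starRingEnd ℂ (x k) * starRingEnd ℂ (x l) := by
  classical
  set cj := starRingEnd ℂ with hcj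
  -- factor the unfolding
  obtain ⟨u, v, huv⟩ := rank_one_factor (unfold3214 T) hrank
  have hfac : ∀ i j k l, T i j k l = u (k, j) * v (i, l) := fun i j k l =>
    huv (k, j) (i, l)
  -- T is nonzero somewhere
  have hMne : ∃ i j k l, T i j k l ≠ 0 := by
    by_contra h
    push_neg at h
    have hz : unfold3214 T = 0 := by
      ext p q; exact h q.1 p.2 p.1 q.2
    rw [hz, Matrix.rank_zero] at hrank
    exact one_ne_zero hrank.symm
  obtain ⟨i0, j0, k0, l0, hne⟩ := hMne
  have hprod : u (k0, j0) * v (i0, l0) ≠ 0 := by rw [← hfac]; exact hne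
  have hu0 : u (k0, j0) ≠ 0 := left_ne_zero_of_mul hprod
  have hv0 : v (i0, l0) ≠ 0 := right_ne_zero_of_mul hprod
  -- conjugate symmetry as an equation on u, v
  have hC : ∀ i j k l, u (k, j) * v (i, l) = cj (u (i, l)) * cj (v (k, j)) := by
    intro i j k l
    have := (hT i j k l).2.2
    rw [hfac i j k l, hfac k l i j, map_mul] at this
    exact this
  have hC0 := hC i0 j0 k0 l0
  have hu1 : u (i0, l0) ≠ 0 := by
    intro h
    apply hprod
    rw [hC0, h]
    simp
  have hv1 : cj (v (k0, j0)) ≠ 0 := by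
    intro h
    apply hprod
    rw [hC0, h, mul_zero]
  -- v = μ * conj u
  set μ : ℂ := v (i0, l0) / cj (u (i0, l0)) with hμ
  have hμne : μ ≠ 0 := div_ne_zero hv0 (by simpa using hu1)
  have hvconj : ∀ p : Fin n × Fin n, v p = μ * cj (u p) := by
    intro p
    -- conj (v p) from column (i0,l0)
    have h1 : u (p.1, p.2) * v (i0, l0) = cj (u (i0, l0)) * cj (v (p.1, p.2)) :=
      hC i0 p.2 p.1 l0
    have h2 : u (k0, j0) * v (p.1, p.2) = cj (u (p.1, p.2)) * cj (v (k0, j0)) :=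
      hC p.1 j0 k0 p.2
    have h3 : u (k0, j0) * v (i0, l0) = cj (u (i0, l0)) * cj (v (k0, j0)) := hC0
    have hcu : cj (u (i0, l0)) ≠ 0 := by simpa using hu1
    -- from h1: cj (v p) = u p * v (i0,l0) / cj (u (i0,l0))
    -- combine into h2
    have key : u (k0, j0) * (v (p.1, p.2) * (cj (u (i0, l0)) * cj (v (k0, j0)))) =
        u (k0, j0) * (cj (u (p.1, p.2)) * (v (i0, l0) * cj (v (k0, j0)))) := by
      calc u (k0, j0) * (v (p.1, p.2) * (cj (u (i0, l0)) * cj (v (k0, j0))))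
          = (u (k0, j0) * v (p.1, p.2)) * (cj (u (i0, l0)) * cj (v (k0, j0))) := by ring
        _ = (cj (u (p.1, p.2)) * cj (v (k0, j0))) * (u (k0, j0) * v (i0, l0)) := by
            rw [h2, h3]
        _ = u (k0, j0) * (cj (u (p.1, p.2)) * (v (i0, l0) * cj (v (k0, j0)))) := by ring
    have key2 : v (p.1, p.2) * (cj (u (i0, l0)) * cj (v (k0, j0))) =
        cj (u (p.1, p.2)) * (v (i0, l0) * cj (v (k0, j0))) :=
      mul_left_cancel₀ hu0 key
    have key3 : v (p.1, p.2) * cj (u (i0, l0)) = cj (u (p.1, p.2)) * v (i0, l0) := by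
      have : (v (p.1, p.2) * cj (u (i0, l0))) * cj (v (k0, j0)) =
          (cj (u (p.1, p.2)) * v (i0, l0)) * cj (v (k0, j0)) := by
        rw [mul_assoc, mul_assoc]; exact key2
      exact mul_right_cancel₀ hv1 this
    have : v p = cj (u p) * v (i0, l0) / cj (u (i0, l0)) := by
      field_simp
      rw [show v p = v (p.1, p.2) from rfl, show u p = u (p.1, p.2) from rfl]
      linear_combination key3
    rw [this, hμ]; ring
  have hT2 : ∀ i j k l, T i j k l = μ * u (k, j) * cj (u (i, l)) := by
    intro i j k l
    rw [hfac i j k l, hvconj (i, l)]; ring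
  -- partial symmetry in first two indices: factor u
  have hA : ∀ i j k l, u (k, j) * cj (u (i, l)) = u (k, i) * cj (u (j, l)) := by
    intro i j k l
    have h := (hT i j k l).1
    rw [hT2 i j k l, hT2 j i k l] at h
    have : μ * (u (k, j) * cj (u (i, l))) = μ * (u (k, i) * cj (u (j, l))) := by
      linear_combination h
    exact mul_left_cancel₀ hμne this
  set g : Fin n → ℂ := fun k => u (k, i0) with hg
  set f : Fin n → ℂ := fun j => cj (u (j, l0)) / cj (u (i0, l0)) with hf
  have hcu : cj (u (i0, l0)) ≠ 0 := by simpa using hu1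
  have huf : ∀ k j, u (k, j) = g k * f j := by
    intro k j
    have h := hA i0 j k l0
    rw [hg, hf]
    field_simp
    linear_combination h
  have hgi0fl0 : g i0 * f l0 ≠ 0 := by rw [← huf]; exact hu1
  have hgk0fj0 : g k0 * f j0 ≠ 0 := by rw [← huf]; exact hu0
  have hfj0 : f j0 ≠ 0 := right_ne_zero_of_mul hgk0fj0
  have hgi0 : g i0 ≠ 0 := left_ne_zero_of_mul hgi0fl0
  have hfl0 : f l0 ≠ 0 := right_ne_zero_of_mul hgi0fl0
  -- partial symmetry in last two indices
  have hB : ∀ k l, g k * cj (f l) = g l * cj (f k) := by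
    intro k l
    have h := (hT i0 j0 k l).2.1
    rw [hT2 i0 j0 k l, hT2 i0 j0 l k, huf k j0, huf l j0, huf i0 l, huf i0 k,
      map_mul, map_mul] at h
    have h2 : (μ * (f j0 * cj (g i0))) * (g k * cj (f l)) =
        (μ * (f j0 * cj (g i0))) * (g l * cj (f k)) := by linear_combination h
    have hne2 : μ * (f j0 * cj (g i0)) ≠ 0 :=
      mul_ne_zero hμne (mul_ne_zero hfj0 (by simpa using hgi0))
    exact mul_left_cancel₀ hne2 h2
  set α : ℂ := g l0 / cj (f l0) with hα
  have hga : ∀ k, g k = α * cj (f k) := by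
    intro k
    have h := hB k l0
    have hcfl0 : cj (f l0) ≠ 0 := by simpa using hfl0
    rw [hα]
    field_simp
    linear_combination h
  set lc : ℂ := μ * (α * cj α) with hlc
  have hT3 : ∀ i j k l, T i j k l = lc * f i * f j * cj (f k) * cj (f l) := by
    intro i j k l
    rw [hT2 i j k l, huf k j, huf i l, hga k, hga i, map_mul, map_mul, hlc]
    simp only [hcj, Complex.conj_conj]
    ring
  -- lc is real
  have hPne : T i0 j0 k0 l0 ≠ 0 := hne
  have hlcP : lc * f i0 * f j0 * cj (f k0) * cj (f l0) ≠ 0 := by rw [← hT3]; exact hne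
  have hlcreal : cj lc = lc := by
    have h := (hT i0 j0 k0 l0).2.2
    rw [hT3 i0 j0 k0 l0, hT3 k0 l0 i0 j0] at h
    simp only [map_mul, hcj, Complex.conj_conj] at h
    have h2 : (f i0 * f j0 * (starRingEnd ℂ) (f k0) * (starRingEnd ℂ) (f l0)) * lc =
        (f i0 * f j0 * (starRingEnd ℂ) (f k0) * (starRingEnd ℂ) (f l0)) *
          (starRingEnd ℂ) lc := by linear_combination h
    have hX : (f i0 * f j0 * (starRingEnd ℂ) (f k0) * (starRingEnd ℂ) (f l0)) ≠ 0 := by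
      intro h0
      apply hlcP
      rw [hcj]
      linear_combination lc * h0
    exact (mul_left_cancel₀ hX h2).symm
  have hre : ((lc.re : ℝ) : ℂ) = lc := Complex.conj_eq_iff_re.mp hlcreal
  constructor
  · exact ⟨fun i => lc * f i, f, fun k => cj (f k), fun l => cj (f l),
      fun i j k l => by rw [hT3 i j k l]⟩
  · refine ⟨lc.re, f, fun i j k l => ?_⟩
    rw [hT3 i j k l, hre]
end

section
/- Let e_1, e_2 be the standard basis vectors of ℝ² and let T = e_1∘e_1∘e_1∘e_1 + e_1∘e_1∘e_2∘e_2 + e_2∘e_2∘e_1∘e_1 + e_2∘e_2∘e_2∘e_2 ∈ ℝ^{2×2×2×2}. Then T is partial-symmetric, its unfolding matrix T_{[1,2;3,4]} has matrix rank one, yet T is not a rank-one tensor, i.e., there exist no vectors a,b,c,d ∈ ℝ² with T = a∘b∘c∘d. -/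
open scoped BigOperators

/-- The unfolding `T_{[1,2;3,4]}`: the entry in the row indexed by `(i,j)` and
the column indexed by `(k,l)` is `T_{ijkl}`. -/
def unfold1234 {n : ℕ} (T : Fin n → Fin n → Fin n → Fin n → ℝ) :
    Matrix (Fin n × Fin n) (Fin n × Fin n) ℝ :=
  fun p q => T p.1 p.2 q.1 q.2

/-- The standard basis vectors of `ℝ²`. -/
def e2 (a : Fin 2) : Fin 2 → ℝ := fun i => if i = a then 1 else 0

/-- The tensor `T = e₁∘e₁∘e₁∘e₁ + e₁∘e₁∘e₂∘e₂ + e₂∘e₂∘e₁∘e₁ + e₂∘e₂∘e₂∘e₂`. -/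
def Tcounter : Fin 2 → Fin 2 → Fin 2 → Fin 2 → ℝ := fun i j k l =>
  e2 0 i * e2 0 j * e2 0 k * e2 0 l + e2 0 i * e2 0 j * e2 1 k * e2 1 l +
  e2 1 i * e2 1 j * e2 0 k * e2 0 l + e2 1 i * e2 1 j * e2 1 k * e2 1 l

/-! `T i j k l = I i j * I k l` with `I` the 2 × 2 identity matrix. Since `I` is symmetric, `T` is
partial-symmetric, and its unfolding is the outer product of the nonzero vector `vec I` with
itself, hence of rank one. But every slice `(k, l) ↦ T i j k l` of a rank-one tensor is a rank-one
matrix, so its 2 × 2 minors vanish, while the slice of `T` at `(i, j) = (0, 0)` is `I`, whose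
determinant is `1`. -/

namespace Matrix

variable {m n K : Type*} [Fintype n] [Field K]

theorem rank_pos_of_apply_ne_zero {A : Matrix m n K} {i : m} {j : n} (hij : A i j ≠ 0) :
    0 < A.rank :=
  calc 0 < (A.submatrix (fun _ : Unit => i) fun _ : Unit => j).rank := by
        rw [rank_of_det_ne_zero (by simpa using hij)]
        simp
    _ ≤ A.rank := rank_submatrix_le A _ _

theorem rank_vecMulVec_eq_one {u : m → K} {v : n → K} (hu : u ≠ 0) (hv : v ≠ 0) :
    (vecMulVec u v).rank = 1 := by
  obtain ⟨i, hi⟩ := Function.ne_iff.mp hu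
  obtain ⟨j, hj⟩ := Function.ne_iff.mp hv
  exact le_antisymm (rank_vecMulVec_le u v) (rank_pos_of_apply_ne_zero (mul_ne_zero hi hj))

end Matrix

theorem isPS_of_isSymm {n : ℕ} {M : Matrix (Fin n) (Fin n) ℝ} (hM : M.IsSymm) :
    IsPS fun i j k l => M i j * M k l := fun i j k l =>
  ⟨by simp only [hM.apply i j], by simp only [hM.apply k l], mul_comm _ _⟩

theorem unfold1234_mul_self {n : ℕ} (M : Matrix (Fin n) (Fin n) ℝ) :
    unfold1234 (fun i j k l => M i j * M k l) =
      Matrix.vecMulVec (Function.uncurry M) (Function.uncurry M) :=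
  rfl

theorem minor_eq_of_rankOne {R ι : Type*} [CommRing R] {T : ι → ι → ι → ι → R}
    {a b c d : ι → R} (hT : ∀ i j k l, T i j k l = a i * b j * c k * d l)
    (i j k l k' l' : ι) :
    T i j k l * T i j k' l' = T i j k l' * T i j k' l := by
  simp only [hT]
  ring

theorem Tcounter_eq :
    Tcounter = fun i j k l =>
      (1 : Matrix (Fin 2) (Fin 2) ℝ) i j * (1 : Matrix (Fin 2) (Fin 2) ℝ) k l := by
  ext i j k l
  fin_cases i <;> fin_cases j <;> fin_cases k <;> fin_cases l <;>
    simp [Tcounter, e2]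

/-- `Tcounter` is partial-symmetric and its unfolding `T_{[1,2;3,4]}` has
rank one, yet `Tcounter` is not a rank-one tensor. -/
theorem unfold1234_rank_one_not_sufficient :
    IsPS Tcounter ∧ (unfold1234 Tcounter).rank = 1 ∧
    ¬ ∃ a b c d : Fin 2 → ℝ, ∀ i j k l,
      Tcounter i j k l = a i * b j * c k * d l := by
  have hvec : Function.uncurry (1 : Matrix (Fin 2) (Fin 2) ℝ) ≠ 0 :=
    fun h => one_ne_zero (congrFun h (0, 0))
  refine ⟨Tcounter_eq ▸ isPS_of_isSymm Matrix.isSymm_one, ?_, ?_⟩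
  · rw [Tcounter_eq, unfold1234_mul_self]
    exact Matrix.rank_vecMulVec_eq_one hvec hvec
  · rintro ⟨a, b, c, d, hT⟩
    simpa [Tcounter_eq] using minor_eq_of_rankOne hT 0 0 0 0 1 1
end

section
/- Let T ∈ ℂ^{n×n×n×n} be a nonzero CPS tensor. Consider the convex problem (P'): minimize −⟨T,X⟩ over CPS tensors X with ‖X_{[3,2;1,4]}‖_* ≤ 1. If X̂ is an optimal solution of (P'), then: (1) ‖X̂_{[3,2;1,4]}‖_* = 1; (2) ‖X̂‖_F ≤ 1; (3) if ‖X̂‖_F = 1 then rank_CP(X̂) = 1. -/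
open scoped BigOperators ComplexOrder

/-- Frobenius norm of a fourth-order complex tensor. -/
noncomputable def tNorm {n : ℕ} (A : Fin n → Fin n → Fin n → Fin n → ℂ) : ℝ :=
  Real.sqrt (∑ i, ∑ j, ∑ k, ∑ l, ‖A i j k l‖ ^ 2)

/-- The nuclear norm of a complex square matrix: the trace of the positive
semidefinite square root of `Xᴴ X`. -/
noncomputable def nuclearNorm {m : Type*} [Fintype m] [DecidableEq m]
    (X : Matrix m m ℂ) : ℝ :=
  ((Matrix.posSemidef_conjTranspose_mul_self X).1.eigenvectorUnitary.1 *
    Matrix.diagonal (fun i => ((√((Matrix.posSemidef_conjTranspose_mul_self X).1.eigenvalues i) : ℝ) : ℂ)) *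
    (star (Matrix.posSemidef_conjTranspose_mul_self X).1.eigenvectorUnitary : Matrix m m ℂ)).trace.re

/-!
Rescaling a nonzero CPS tensor `X` by `1 / ‖X_{[3,2;1,4]}‖_*` gives a feasible point, so
optimality of `X̂` yields `Re⟨T,X⟩ / ‖X_{[3,2;1,4]}‖_* ≤ Re⟨T,X̂⟩`. Taking `X = T` makes
`Re⟨T,X̂⟩` positive, and then `X = X̂` forces `‖X̂_{[3,2;1,4]}‖_* ≥ 1`.

For the eigenvalues `μᵢ ≥ 0` of `MᴴM`, the nuclear norm of `M` is `∑ √μᵢ` and its squared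
Frobenius norm is `∑ μᵢ`; hence `‖M‖_F ≤ ‖M‖_*`, with equality only if at most one `μᵢ`
is nonzero, i.e. `rank M ≤ 1`. So `‖X̂‖_F = 1` gives `X̂_{ijkl} = u_{kj} v_{il}`, and the
partial symmetries `X̂_{ijkl} = X̂_{jikl} = X̂_{ijlk}` split `u` and `v` into a rank-one
tensor.
-/

lemma subsingleton_ne_zero_of_sq_sum_eq_sum_sq {ι R : Type*} [Fintype ι] [Semiring R]
    [LinearOrder R] [IsStrictOrderedRing R] {s : ι → R} (hs : ∀ i, 0 ≤ s i)
    (h : (∑ i, s i) ^ 2 = ∑ i, s i ^ 2) : Subsingleton {i // s i ≠ 0} := by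
  classical
  refine ⟨fun ⟨i, hi⟩ ⟨j, hj⟩ => Subtype.ext (by_contra fun hij => h.not_gt ?_)⟩
  have hi' : 0 < s i := (hs i).lt_of_ne' hi
  have hpair : s i + s j ≤ ∑ k, s k := by
    rw [← Finset.sum_pair hij]
    exact Finset.sum_le_sum_of_subset_of_nonneg (Finset.subset_univ _) fun k _ _ => hs k
  rw [sq, Finset.sum_mul]
  refine Finset.sum_lt_sum (fun k _ => ?_) ⟨i, Finset.mem_univ _, ?_⟩
  · rw [sq]
    exact mul_le_mul_of_nonneg_left
      (Finset.single_le_sum (fun k _ => hs k) (Finset.mem_univ k)) (hs k)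
  · rw [sq]
    exact mul_lt_mul_of_pos_left
      ((lt_add_of_pos_right _ ((hs j).lt_of_ne' hj)).trans_le hpair) hi'

lemma Matrix.exists_eq_vecMulVec_of_rank_le_one {K m n : Type*} [Field K] [Fintype m]
    [Fintype n] {A : Matrix m n K} (h : A.rank ≤ 1) : ∃ u v, A = Matrix.vecMulVec u v := by
  rw [Matrix.rank_eq_finrank_span_cols, finrank_le_one_iff] at h
  obtain ⟨u, hu⟩ := h
  choose v hv using fun q => hu ⟨A.col q, Submodule.subset_span ⟨q, rfl⟩⟩
  refine ⟨u, v, Matrix.ext fun p q => ?_⟩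
  have := congrFun (congrArg Subtype.val (hv q)) p
  simp only [Submodule.coe_smul, Pi.smul_apply, smul_eq_mul, Matrix.col_apply] at this
  rw [Matrix.vecMulVec_apply, ← this, mul_comm]

lemma Matrix.sum_norm_sq_pos {α m n : Type*} [Fintype m] [Fintype n] [NormedAddCommGroup α]
    {X : Matrix m n α} (hX : X ≠ 0) : 0 < ∑ p, ∑ q, ‖X p q‖ ^ 2 := by
  obtain ⟨p, hp⟩ := Function.ne_iff.mp hX
  obtain ⟨q, hq⟩ := Function.ne_iff.mp hp
  refine Finset.sum_pos' (fun _ _ => by positivity) ⟨p, Finset.mem_univ _, ?_⟩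
  exact Finset.sum_pos' (fun _ _ => by positivity)
    ⟨q, Finset.mem_univ _, pow_pos (norm_pos_iff.mpr hq) 2⟩

namespace Matrix

variable {m : Type*} [Fintype m] [DecidableEq m]

lemma nuclearNorm_eq_sum_sqrt_eigenvalues (X : Matrix m m ℂ) :
    nuclearNorm X = ∑ i, √((posSemidef_conjTranspose_mul_self X).1.eigenvalues i) := by
  rw [nuclearNorm, trace_mul_cycle, UnitaryGroup.star_mul_self, one_mul, trace_diagonal,
    Complex.re_sum]
  simp only [Complex.ofReal_re]

lemma nuclearNorm_eq_re_trace_cfc_sqrt (X : Matrix m m ℂ) :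
    nuclearNorm X = (cfc Real.sqrt (Xᴴ * X)).trace.re := by
  rw [(posSemidef_conjTranspose_mul_self X).1.cfc_eq]
  rfl

lemma sum_eigenvalues_conjTranspose_mul_self (X : Matrix m m ℂ) :
    ∑ i, (posSemidef_conjTranspose_mul_self X).1.eigenvalues i =
      ∑ p, ∑ q, ‖X p q‖ ^ 2 := by
  have htrace := congrArg Complex.re
    ((posSemidef_conjTranspose_mul_self X).1.trace_eq_sum_eigenvalues)
  simp only [Complex.coe_algebraMap, Complex.re_sum, Complex.ofReal_re] at htrace
  rw [← htrace, trace, Complex.re_sum, Finset.sum_comm]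
  refine Finset.sum_congr rfl fun p _ => ?_
  simp only [diag_apply, mul_apply, conjTranspose_apply, Complex.re_sum]
  refine Finset.sum_congr rfl fun q _ => ?_
  rw [Complex.star_def, mul_comm, Complex.mul_conj, Complex.normSq_eq_norm_sq]
  rfl

lemma nuclearNorm_nonneg (X : Matrix m m ℂ) : 0 ≤ nuclearNorm X := by
  rw [nuclearNorm_eq_sum_sqrt_eigenvalues]
  positivity

lemma nuclearNorm_eq_zero_iff {X : Matrix m m ℂ} : nuclearNorm X = 0 ↔ X = 0 := by
  refine ⟨fun h => ?_, fun h => ?_⟩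
  · rw [nuclearNorm_eq_sum_sqrt_eigenvalues,
      Finset.sum_eq_zero_iff_of_nonneg fun i _ => Real.sqrt_nonneg _] at h
    rw [← conjTranspose_mul_self_eq_zero,
      ← (posSemidef_conjTranspose_mul_self X).1.eigenvalues_eq_zero_iff]
    funext i
    exact le_antisymm (Real.sqrt_eq_zero'.mp (h i (Finset.mem_univ i)))
      ((posSemidef_conjTranspose_mul_self X).eigenvalues_nonneg i)
  · subst h
    simp [nuclearNorm_eq_re_trace_cfc_sqrt]

lemma nuclearNorm_pos {X : Matrix m m ℂ} (hX : X ≠ 0) : 0 < nuclearNorm X :=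
  (nuclearNorm_nonneg X).lt_of_ne' (nuclearNorm_eq_zero_iff.not.mpr hX)

lemma nuclearNorm_smul_of_nonneg (X : Matrix m m ℂ) {c : ℝ} (hc : 0 ≤ c) :
    nuclearNorm ((c : ℂ) • X) = c * nuclearNorm X := by
  have hsq : ((c : ℂ) • X)ᴴ * ((c : ℂ) • X) = (c ^ 2) • (Xᴴ * X) := by
    rw [conjTranspose_smul, Complex.star_def, Complex.conj_ofReal, smul_mul_smul_comm,
      ← Complex.ofReal_mul, ← sq, ← Complex.coe_smul]
  have hsqrt : (fun x => √(c ^ 2 • x)) = fun x => c * √x := by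
    funext x
    rw [smul_eq_mul, Real.sqrt_mul (sq_nonneg c), Real.sqrt_sq hc]
  have hcfc : cfc Real.sqrt ((c ^ 2) • (Xᴴ * X)) = c • cfc Real.sqrt (Xᴴ * X) := by
    rw [← cfc_const_mul c Real.sqrt (Xᴴ * X), ← hsqrt]
    exact (cfc_comp_smul (c ^ 2) Real.sqrt (Xᴴ * X)
      (ha := (posSemidef_conjTranspose_mul_self X).1)).symm
  rw [nuclearNorm_eq_re_trace_cfc_sqrt, nuclearNorm_eq_re_trace_cfc_sqrt, hsq, hcfc, trace_smul,
    Complex.real_smul, Complex.re_ofReal_mul]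

lemma sum_norm_sq_le_nuclearNorm_sq (X : Matrix m m ℂ) :
    ∑ p, ∑ q, ‖X p q‖ ^ 2 ≤ nuclearNorm X ^ 2 := by
  have hμ := (posSemidef_conjTranspose_mul_self X).eigenvalues_nonneg
  rw [← sum_eigenvalues_conjTranspose_mul_self, nuclearNorm_eq_sum_sqrt_eigenvalues]
  calc ∑ i, (posSemidef_conjTranspose_mul_self X).1.eigenvalues i
      = ∑ i, √((posSemidef_conjTranspose_mul_self X).1.eigenvalues i) ^ 2 :=
        Finset.sum_congr rfl fun i _ => (Real.sq_sqrt (hμ i)).symm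
    _ ≤ _ := Finset.sum_sq_le_sq_sum_of_nonneg fun i _ => Real.sqrt_nonneg _

lemma sqrt_sum_norm_sq_le_nuclearNorm (X : Matrix m m ℂ) :
    √(∑ p, ∑ q, ‖X p q‖ ^ 2) ≤ nuclearNorm X :=
  Real.sqrt_le_iff.mpr ⟨nuclearNorm_nonneg X, sum_norm_sq_le_nuclearNorm_sq X⟩

lemma rank_le_one_of_nuclearNorm_sq_eq {X : Matrix m m ℂ}
    (h : nuclearNorm X ^ 2 = ∑ p, ∑ q, ‖X p q‖ ^ 2) : X.rank ≤ 1 := by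
  have hμ := (posSemidef_conjTranspose_mul_self X).eigenvalues_nonneg
  rw [nuclearNorm_eq_sum_sqrt_eigenvalues, ← sum_eigenvalues_conjTranspose_mul_self] at h
  conv_rhs at h => enter [2, i]; rw [← Real.sq_sqrt (hμ i)]
  have hsub := subsingleton_ne_zero_of_sq_sum_eq_sum_sq (fun i => Real.sqrt_nonneg _) h
  rw [← rank_conjTranspose_mul_self,
    (posSemidef_conjTranspose_mul_self X).1.rank_eq_card_non_zero_eigs]
  refine Fintype.card_le_one_iff_subsingleton.mpr ⟨fun ⟨i, hi⟩ ⟨j, hj⟩ => ?_⟩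
  have := hsub.elim ⟨i, by simpa [Real.sqrt_eq_zero (hμ i)] using hi⟩
    ⟨j, by simpa [Real.sqrt_eq_zero (hμ j)] using hj⟩
  have hij : i = j := congrArg Subtype.val this
  exact Subtype.ext hij

end Matrix

section Tensor

variable {n : ℕ}

lemma unfold3214_injective : Function.Injective (unfold3214 (n := n)) :=
  fun _ _ h => by
    funext i j k l
    exact congrFun (congrFun h (k, j)) (i, l)

lemma unfold3214_ne_zero {A : Fin n → Fin n → Fin n → Fin n → ℂ} (hA : A ≠ 0) :
    unfold3214 A ≠ 0 :=
  unfold3214_injective.ne hA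

lemma unfold3214_smul (c : ℂ) (A : Fin n → Fin n → Fin n → Fin n → ℂ) :
    unfold3214 (c • A) = c • unfold3214 A :=
  rfl

lemma sum_norm_sq_unfold3214 (A : Fin n → Fin n → Fin n → Fin n → ℂ) :
    ∑ p, ∑ q, ‖unfold3214 A p q‖ ^ 2 = ∑ i, ∑ j, ∑ k, ∑ l, ‖A i j k l‖ ^ 2 := by
  simp only [unfold3214, Fintype.sum_prod_type]
  calc ∑ k, ∑ j, ∑ i, ∑ l, ‖A i j k l‖ ^ 2
      = ∑ k, ∑ i, ∑ j, ∑ l, ‖A i j k l‖ ^ 2 :=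
        Finset.sum_congr rfl fun _ _ => Finset.sum_comm
    _ = ∑ i, ∑ k, ∑ j, ∑ l, ‖A i j k l‖ ^ 2 := Finset.sum_comm
    _ = ∑ i, ∑ j, ∑ k, ∑ l, ‖A i j k l‖ ^ 2 :=
        Finset.sum_congr rfl fun _ _ => Finset.sum_comm

lemma tNorm_eq_sqrt_sum_norm_sq_unfold3214 (A : Fin n → Fin n → Fin n → Fin n → ℂ) :
    tNorm A = √(∑ p, ∑ q, ‖unfold3214 A p q‖ ^ 2) := by
  rw [tNorm, sum_norm_sq_unfold3214]

lemma tNorm_le_nuclearNorm_unfold3214 (A : Fin n → Fin n → Fin n → Fin n → ℂ) :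
    tNorm A ≤ nuclearNorm (unfold3214 A) := by
  rw [tNorm_eq_sqrt_sum_norm_sq_unfold3214]
  exact Matrix.sqrt_sum_norm_sq_le_nuclearNorm _

lemma rank_unfold3214_le_one_of_tNorm_eq {A : Fin n → Fin n → Fin n → Fin n → ℂ}
    (h : tNorm A = nuclearNorm (unfold3214 A)) : (unfold3214 A).rank ≤ 1 := by
  refine Matrix.rank_le_one_of_nuclearNorm_sq_eq ?_
  rw [← h, tNorm_eq_sqrt_sum_norm_sq_unfold3214, Real.sq_sqrt (by positivity)]

lemma re_tInner_self (A : Fin n → Fin n → Fin n → Fin n → ℂ) :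
    (tInner A A).re = ∑ i, ∑ j, ∑ k, ∑ l, ‖A i j k l‖ ^ 2 := by
  simp only [tInner, Complex.re_sum, Complex.mul_conj, Complex.normSq_eq_norm_sq]
  rfl

lemma re_tInner_self_pos {A : Fin n → Fin n → Fin n → Fin n → ℂ} (hA : A ≠ 0) :
    0 < (tInner A A).re := by
  rw [re_tInner_self, ← sum_norm_sq_unfold3214]
  exact Matrix.sum_norm_sq_pos (unfold3214_ne_zero hA)

lemma re_tInner_ofReal_smul_right (T A : Fin n → Fin n → Fin n → Fin n → ℂ) (c : ℝ) :
    (tInner T ((c : ℂ) • A)).re = c * (tInner T A).re := by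
  have hterm : ∀ i j k l, T i j k l * starRingEnd ℂ (((c : ℂ) • A) i j k l) =
      c * (T i j k l * starRingEnd ℂ (A i j k l)) := fun i j k l => by
    simp only [Pi.smul_apply, smul_eq_mul, map_mul, Complex.conj_ofReal]
    ring
  simp only [tInner, hterm, ← Finset.mul_sum, Complex.re_ofReal_mul]

lemma IsCPS.ofReal_smul {A : Fin n → Fin n → Fin n → Fin n → ℂ} (hA : IsCPS A) (c : ℝ) :
    IsCPS ((c : ℂ) • A) := fun i j k l => by
  obtain ⟨hij, hkl, hconj⟩ := hA i j k l
  simp only [Pi.smul_apply, smul_eq_mul, map_mul, Complex.conj_ofReal]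
  exact ⟨by rw [hij], by rw [hkl], by rw [hconj]⟩

lemma exists_eq_outer_of_unfold3214_eq_vecMulVec {A : Fin n → Fin n → Fin n → Fin n → ℂ}
    (hij : ∀ i j k l, A i j k l = A j i k l) (hkl : ∀ i j k l, A i j k l = A i j l k)
    {u v : Fin n × Fin n → ℂ} (huv : unfold3214 A = Matrix.vecMulVec u v) :
    ∃ a b c d : Fin n → ℂ, ∀ i j k l, A i j k l = a i * b j * c k * d l := by
  have hA : ∀ i j k l, A i j k l = u (k, j) * v (i, l) := fun i j k l =>
    congrFun (congrFun huv (k, j)) (i, l)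
  by_cases hA0 : ∀ i j k l, A i j k l = 0
  · exact ⟨0, 0, 0, 0, fun i j k l => by simp [hA0]⟩
  push Not at hA0
  obtain ⟨i₀, j₀, k₀, l₀, hA₀⟩ := hA0
  rw [hA] at hA₀
  set α := u (k₀, j₀)
  set β := v (i₀, l₀)
  have hα : α ≠ 0 := left_ne_zero_of_mul hA₀
  have hβ : β ≠ 0 := right_ne_zero_of_mul hA₀
  have hv : ∀ i l, α * v (i, l) = u (k₀, i) * v (j₀, l) := fun i l => by
    simpa only [hA] using hij i j₀ k₀ l
  have hu : ∀ k j, β * u (k, j) = u (l₀, j) * v (i₀, k) := fun k j => by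
    simpa only [hA, mul_comm] using hkl i₀ j k l₀
  refine ⟨fun i => u (k₀, i) / (α * β), fun j => u (l₀, j), fun k => v (i₀, k),
    fun l => v (j₀, l), fun i j k l => ?_⟩
  -- `α β A_{ijkl} = (β u_{kj}) (α v_{il})`, and each factor splits by one symmetry.
  have key :
      α * β * (u (k, j) * v (i, l)) = u (k₀, i) * u (l₀, j) * v (i₀, k) * v (j₀, l) := by
    linear_combination (β * u (k, j)) * hv i l + (u (k₀, i) * v (j₀, l)) * hu k j
  rw [hA]
  field_simp
  linear_combination key

lemma rankCP_eq_one {A : Fin n → Fin n → Fin n → Fin n → ℂ} (hA : A ≠ 0)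
    {a b c d : Fin n → ℂ} (habcd : ∀ i j k l, A i j k l = a i * b j * c k * d l) :
    rankCP A = 1 := by
  refine le_antisymm (Nat.sInf_le ⟨fun _ => a, fun _ => b, fun _ => c, fun _ => d, by simpa⟩)
    (le_csInf ⟨1, fun _ => a, fun _ => b, fun _ => c, fun _ => d, by simpa⟩ ?_)
  rintro R ⟨a', b', c', d', h⟩
  refine Nat.one_le_iff_ne_zero.mpr ?_
  rintro rfl
  refine hA (funext fun i => funext fun j => funext fun k => funext fun l => ?_)
  simpa using h i j k l

lemma re_tInner_div_nuclearNorm_le_of_optimal {T Xhat : Fin n → Fin n → Fin n → Fin n → ℂ}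
    (hXhatOpt : ∀ X : Fin n → Fin n → Fin n → Fin n → ℂ, IsCPS X →
      nuclearNorm (unfold3214 X) ≤ 1 → -(tInner T Xhat).re ≤ -(tInner T X).re)
    {X : Fin n → Fin n → Fin n → Fin n → ℂ} (hX : IsCPS X) (hX0 : X ≠ 0) :
    (tInner T X).re / nuclearNorm (unfold3214 X) ≤ (tInner T Xhat).re := by
  set ν := nuclearNorm (unfold3214 X)
  have hν : 0 < ν := Matrix.nuclearNorm_pos (unfold3214_ne_zero hX0)
  have hfeas : nuclearNorm (unfold3214 (((ν⁻¹ : ℝ) : ℂ) • X)) ≤ 1 := by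
    rw [unfold3214_smul, Matrix.nuclearNorm_smul_of_nonneg _ (inv_nonneg.mpr hν.le),
      inv_mul_cancel₀ hν.ne']
  have := neg_le_neg_iff.mp (hXhatOpt _ (hX.ofReal_smul ν⁻¹) hfeas)
  rwa [re_tInner_ofReal_smul_right, inv_mul_eq_div] at this

lemma nuclearNorm_unfold3214_eq_one_of_optimal {T Xhat : Fin n → Fin n → Fin n → Fin n → ℂ}
    (hTcps : IsCPS T) (hT0 : T ≠ 0) (hXhatCps : IsCPS Xhat)
    (hXhatFeas : nuclearNorm (unfold3214 Xhat) ≤ 1)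
    (hXhatOpt : ∀ X : Fin n → Fin n → Fin n → Fin n → ℂ, IsCPS X →
      nuclearNorm (unfold3214 X) ≤ 1 → -(tInner T Xhat).re ≤ -(tInner T X).re) :
    nuclearNorm (unfold3214 Xhat) = 1 := by
  have hTT : 0 < (tInner T T).re / nuclearNorm (unfold3214 T) :=
    div_pos (re_tInner_self_pos hT0) (Matrix.nuclearNorm_pos (unfold3214_ne_zero hT0))
  have hpos : 0 < (tInner T Xhat).re :=
    hTT.trans_le (re_tInner_div_nuclearNorm_le_of_optimal hXhatOpt hTcps hT0)
  have hXhat0 : Xhat ≠ 0 := by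
    rintro rfl
    simp [tInner] at hpos
  have hν := Matrix.nuclearNorm_pos (unfold3214_ne_zero hXhat0)
  have hle := re_tInner_div_nuclearNorm_le_of_optimal hXhatOpt hXhatCps hXhat0
  rw [div_le_iff₀ hν] at hle
  exact le_antisymm hXhatFeas (le_of_mul_le_mul_left (by linarith) hpos)

end Tensor

/-- Properties of an optimal solution of the nuclear-norm constrained convex
relaxation of the best rank-one approximation problem. -/
theorem convex_relaxation_constrained_properties {n : ℕ}
    (T : Fin n → Fin n → Fin n → Fin n → ℂ) (hTcps : IsCPS T) (hT0 : T ≠ 0)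
    (Xhat : Fin n → Fin n → Fin n → Fin n → ℂ)
    (hXhatCps : IsCPS Xhat) (hXhatFeas : nuclearNorm (unfold3214 Xhat) ≤ 1)
    (hXhatOpt : ∀ X : Fin n → Fin n → Fin n → Fin n → ℂ, IsCPS X →
      nuclearNorm (unfold3214 X) ≤ 1 →
      -(tInner T Xhat).re ≤ -(tInner T X).re) :
    nuclearNorm (unfold3214 Xhat) = 1 ∧
    tNorm Xhat ≤ 1 ∧
    (tNorm Xhat = 1 → rankCP Xhat = 1) := by
  have hν : nuclearNorm (unfold3214 Xhat) = 1 :=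
    nuclearNorm_unfold3214_eq_one_of_optimal hTcps hT0 hXhatCps hXhatFeas hXhatOpt
  refine ⟨hν, (tNorm_le_nuclearNorm_unfold3214 Xhat).trans hXhatFeas, fun hF => ?_⟩
  have hXhat0 : Xhat ≠ 0 := by
    rintro rfl
    exact one_ne_zero (hν.symm.trans (Matrix.nuclearNorm_eq_zero_iff.mpr rfl))
  obtain ⟨u, v, huv⟩ := Matrix.exists_eq_vecMulVec_of_rank_le_one
    (rank_unfold3214_le_one_of_tNorm_eq (hF.trans hν.symm))
  obtain ⟨a, b, c, d, habcd⟩ := exists_eq_outer_of_unfold3214_eq_vecMulVec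
    (fun i j k l => (hXhatCps i j k l).1) (fun i j k l => (hXhatCps i j k l).2.1) huv
  exact rankCP_eq_one hXhat0 habcd
end

section
/- Let A ∈ ℝ^{n×n×n×n} be a partial-symmetric tensor. Then the infimum of ‖A − λ·X₁∘X₂‖_F over λ ∈ ℝ and matrices X₁, X₂ ∈ ℝ^{n×n} with ‖X₁‖_F = ‖X₂‖_F = 1 equals the infimum of ‖A − λ·X∘X‖_F over λ ∈ ℝ and symmetric matrices X ∈ ℝ^{n×n} with ‖X‖_F = 1. -/
/-!
Write `B(X, Y) = ∑ A_{ijkl} X_{ij} Y_{kl}`. For unit `X, Y` one has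
`‖A - λ X∘Y‖² = ‖A‖² - 2λ B(X, Y) + λ²`, so `λ = B(Z, Z)` for a symmetric unit `Z` does at least
as well as any `λ` with `X, Y` once `|B(X, Y)| ≤ |B(Z, Z)|`. Partial symmetry makes `B` symmetric
and lets `X, Y` be replaced by their symmetric parts, which have norm at most one. Polarization
`4 B(x, y) = B(x + y, x + y) - B(x - y, x - y)` with `B(u, u) = ‖u‖² B(û, û)` and the parallelogram
law `‖x + y‖² + ‖x - y‖² ≤ 4` then gives `|B(x, y)| ≤ max (|B(p, p)|, |B(q, q)|)` for the unit
symmetric matrices `p, q` in the directions of `x + y` and `x - y`.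
-/

open scoped BigOperators

/-- Frobenius norm of a fourth-order real tensor. -/
noncomputable def tNormR {n : ℕ} (A : Fin n → Fin n → Fin n → Fin n → ℝ) : ℝ :=
  Real.sqrt (∑ i, ∑ j, ∑ k, ∑ l, (A i j k l) ^ 2)

/-- Frobenius norm of a real matrix. -/
noncomputable def mNormR {n : ℕ} (X : Matrix (Fin n) (Fin n) ℝ) : ℝ :=
  Real.sqrt (∑ i, ∑ j, (X i j) ^ 2)

open Finset

theorem sum_four_comm {α β γ δ M : Type*} [Fintype α] [Fintype β] [Fintype γ] [Fintype δ]
    [AddCommMonoid M] (f : α → β → γ → δ → M) :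
    ∑ i, ∑ j, ∑ k, ∑ l, f i j k l = ∑ k, ∑ l, ∑ i, ∑ j, f i j k l :=
  calc ∑ i, ∑ j, ∑ k, ∑ l, f i j k l = ∑ p : α × β, ∑ q : γ × δ, f p.1 p.2 q.1 q.2 := by
        simp only [Fintype.sum_prod_type]
    _ = ∑ q : γ × δ, ∑ p : α × β, f p.1 p.2 q.1 q.2 := sum_comm
    _ = ∑ k, ∑ l, ∑ i, ∑ j, f i j k l := by simp only [Fintype.sum_prod_type]

namespace LinearMap.BilinForm

variable {E : Type*} [NormedAddCommGroup E] [InnerProductSpace ℝ E]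

theorem exists_mem_norm_eq_one_apply_self_eq (B : LinearMap.BilinForm ℝ E) {K : Submodule ℝ E}
    (hK : K ≠ ⊥) {u : E} (hu : u ∈ K) : ∃ z ∈ K, ‖z‖ = 1 ∧ B u u = ‖u‖ ^ 2 * B z z := by
  rcases eq_or_ne u 0 with rfl | hu0
  · obtain ⟨w, hwK, hw⟩ := Submodule.exists_mem_ne_zero_of_ne_bot hK
    exact ⟨_, K.smul_mem _ hwK, norm_smul_inv_norm (𝕜 := ℝ) hw, by simp⟩
  · refine ⟨_, K.smul_mem _ hu, norm_smul_inv_norm (𝕜 := ℝ) hu0, ?_⟩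
    have hu_norm : ‖u‖ ≠ 0 := norm_ne_zero_iff.mpr hu0
    simp only [RCLike.ofReal_real_eq_id, _root_.id_eq, map_smul, LinearMap.smul_apply, smul_eq_mul]
    field_simp

theorem IsSymm.exists_mem_norm_eq_one_abs_apply_le {B : LinearMap.BilinForm ℝ E}
    (hB : B.IsSymm) {K : Submodule ℝ E} (hK : K ≠ ⊥) {x y : E} (hxK : x ∈ K) (hyK : y ∈ K)
    (hx : ‖x‖ ≤ 1) (hy : ‖y‖ ≤ 1) : ∃ z ∈ K, ‖z‖ = 1 ∧ |B x y| ≤ |B z z| := by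
  obtain ⟨p, hpK, hp1, hp⟩ := B.exists_mem_norm_eq_one_apply_self_eq hK (K.add_mem hxK hyK)
  obtain ⟨q, hqK, hq1, hq⟩ := B.exists_mem_norm_eq_one_apply_self_eq hK (K.sub_mem hxK hyK)
  have hpol : 4 * B x y = B (x + y) (x + y) - B (x - y) (x - y) := by
    simp only [map_add, map_sub, LinearMap.add_apply, LinearMap.sub_apply, hB.eq y x]
    ring
  have hpar : ‖x + y‖ ^ 2 + ‖x - y‖ ^ 2 ≤ 4 := by
    rw [parallelogram_law_with_norm ℝ]
    nlinarith [norm_nonneg x, norm_nonneg y]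
  set m := max |B p p| |B q q|
  have key : 4 * |B x y| ≤ 4 * m :=
    calc 4 * |B x y| = |‖x + y‖ ^ 2 * B p p - ‖x - y‖ ^ 2 * B q q| := by
          rw [← hp, ← hq, ← hpol, abs_mul, abs_of_pos (four_pos : (0 : ℝ) < 4)]
      _ ≤ ‖x + y‖ ^ 2 * |B p p| + ‖x - y‖ ^ 2 * |B q q| :=
          (abs_sub _ _).trans_eq (by rw [abs_mul, abs_mul, abs_sq, abs_sq])
      _ ≤ (‖x + y‖ ^ 2 + ‖x - y‖ ^ 2) * m := by
          rw [add_mul]; gcongr; exacts [le_max_left .., le_max_right ..]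
      _ ≤ 4 * m := by gcongr
  rcases max_choice |B p p| |B q q| with h | h
  · exact ⟨p, hpK, hp1, by linarith⟩
  · exact ⟨q, hqK, hq1, by linarith⟩

end LinearMap.BilinForm

namespace Matrix

def symmetricSubmodule (m R : Type*) [CommSemiring R] : Submodule R (Matrix m m R) :=
  LinearMap.eqLocus (transposeLinearEquiv m m R R).toLinearMap LinearMap.id

theorem mem_symmetricSubmodule {m R : Type*} [CommSemiring R] {X : Matrix m m R} :
    X ∈ symmetricSubmodule m R ↔ X.IsSymm :=
  Iff.rfl

def euclideanEquiv {m p : Type*} : Matrix m p ℝ ≃ₗ[ℝ] EuclideanSpace ℝ (m × p) :=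
  (LinearEquiv.curry ℝ ℝ m p).symm.trans (WithLp.linearEquiv 2 ℝ _).symm

theorem euclideanEquiv_apply {m p : Type*} (X : Matrix m p ℝ) (i : m) (j : p) :
    euclideanEquiv X (i, j) = X i j :=
  rfl

end Matrix

section

open scoped Matrix

variable {n : ℕ}

theorem mNormR_sq (X : Matrix (Fin n) (Fin n) ℝ) : mNormR X ^ 2 = ∑ i, ∑ j, X i j ^ 2 :=
  Real.sq_sqrt (by positivity)

theorem mNormR_eq_norm_euclideanEquiv (X : Matrix (Fin n) (Fin n) ℝ) :
    mNormR X = ‖Matrix.euclideanEquiv X‖ := by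
  simp only [EuclideanSpace.norm_eq, Fintype.sum_prod_type, Matrix.euclideanEquiv_apply,
    Real.norm_eq_abs, sq_abs, mNormR]

theorem mNormR_transpose (X : Matrix (Fin n) (Fin n) ℝ) : mNormR Xᵀ = mNormR X := by
  rw [mNormR, mNormR, sum_comm]
  rfl

theorem mNormR_symmetrize_le (X : Matrix (Fin n) (Fin n) ℝ) :
    mNormR ((2 : ℝ)⁻¹ • (X + Xᵀ)) ≤ mNormR X := by
  have h := norm_add_le (Matrix.euclideanEquiv X) (Matrix.euclideanEquiv Xᵀ)
  rw [← mNormR_eq_norm_euclideanEquiv, ← mNormR_eq_norm_euclideanEquiv, mNormR_transpose] at h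
  rw [mNormR_eq_norm_euclideanEquiv, map_smul, map_add, norm_smul,
    Real.norm_of_nonneg (by norm_num)]
  linarith

theorem tNormR_nonneg (A : Fin n → Fin n → Fin n → Fin n → ℝ) : 0 ≤ tNormR A :=
  Real.sqrt_nonneg _

theorem tNormR_sq (A : Fin n → Fin n → Fin n → Fin n → ℝ) :
    tNormR A ^ 2 = ∑ i, ∑ j, ∑ k, ∑ l, A i j k l ^ 2 :=
  Real.sq_sqrt (by positivity)

def tensorForm (A : Fin n → Fin n → Fin n → Fin n → ℝ) :
    LinearMap.BilinForm ℝ (Matrix (Fin n) (Fin n) ℝ) :=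
  LinearMap.mk₂ ℝ (fun X Y => ∑ i, ∑ j, ∑ k, ∑ l, A i j k l * X i j * Y k l)
    (fun X X' Y => by simp only [Matrix.add_apply, mul_add, add_mul, sum_add_distrib])
    (fun c X Y => by
      simp only [Matrix.smul_apply, smul_eq_mul, mul_sum, mul_assoc, mul_left_comm _ c])
    (fun X Y Y' => by simp only [Matrix.add_apply, mul_add, sum_add_distrib])
    (fun c X Y => by
      simp only [Matrix.smul_apply, smul_eq_mul, mul_sum, mul_assoc, mul_left_comm _ c])

theorem tensorForm_apply (A : Fin n → Fin n → Fin n → Fin n → ℝ)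
    (X Y : Matrix (Fin n) (Fin n) ℝ) :
    tensorForm A X Y = ∑ i, ∑ j, ∑ k, ∑ l, A i j k l * X i j * Y k l :=
  rfl

variable {A : Fin n → Fin n → Fin n → Fin n → ℝ}

theorem IsPS.tensorForm_isSymm (hA : IsPS A) : (tensorForm A).IsSymm := by
  refine ⟨fun X Y => ?_⟩
  rw [tensorForm_apply, tensorForm_apply, sum_four_comm]
  refine sum_congr rfl fun k _ => sum_congr rfl fun l _ => sum_congr rfl fun i _ =>
    sum_congr rfl fun j _ => ?_
  rw [(hA i j k l).2.2]
  ring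

theorem IsPS.tensorForm_transpose_left (hA : IsPS A) (X Y : Matrix (Fin n) (Fin n) ℝ) :
    tensorForm A Xᵀ Y = tensorForm A X Y := by
  rw [tensorForm_apply, tensorForm_apply, sum_comm]
  refine sum_congr rfl fun i _ => sum_congr rfl fun j _ => sum_congr rfl fun k _ =>
    sum_congr rfl fun l _ => ?_
  rw [Matrix.transpose_apply, (hA j i k l).1]

theorem IsPS.tensorForm_symmetrize (hA : IsPS A) (X Y : Matrix (Fin n) (Fin n) ℝ) :
    tensorForm A ((2 : ℝ)⁻¹ • (X + Xᵀ)) ((2 : ℝ)⁻¹ • (Y + Yᵀ)) = tensorForm A X Y := by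
  have hleft : ∀ S T, tensorForm A ((2 : ℝ)⁻¹ • (S + Sᵀ)) T = tensorForm A S T := fun S T => by
    simp only [map_smul, map_add, LinearMap.smul_apply, LinearMap.add_apply,
      hA.tensorForm_transpose_left, smul_eq_mul]
    ring
  rw [hleft, hA.tensorForm_isSymm.eq, hleft, hA.tensorForm_isSymm.eq]

theorem IsPS.exists_isSymm_abs_tensorForm_le (hA : IsPS A) {X Y : Matrix (Fin n) (Fin n) ℝ}
    (hX : mNormR X = 1) (hY : mNormR Y = 1) :
    ∃ Z : Matrix (Fin n) (Fin n) ℝ, Z.IsSymm ∧ mNormR Z = 1 ∧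
      |tensorForm A X Y| ≤ |tensorForm A Z Z| := by
  set K := (Matrix.symmetricSubmodule (Fin n) ℝ).map Matrix.euclideanEquiv.toLinearMap
  set B : LinearMap.BilinForm ℝ (EuclideanSpace ℝ (Fin n × Fin n)) :=
    (tensorForm A).compl₁₂ Matrix.euclideanEquiv.symm.toLinearMap
      Matrix.euclideanEquiv.symm.toLinearMap
  have hB : B.IsSymm := ⟨fun _ _ => hA.tensorForm_isSymm.eq _ _⟩
  have : Nonempty (Fin n) := by
    by_contra h
    simp [not_nonempty_iff.mp h, mNormR] at hX
  have hK : K ≠ ⊥ := (Submodule.ne_bot_iff K).mpr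
    ⟨Matrix.euclideanEquiv 1, Submodule.mem_map_of_mem Matrix.isSymm_one, by simp⟩
  have hsymK : ∀ S : Matrix (Fin n) (Fin n) ℝ, Matrix.euclideanEquiv ((2 : ℝ)⁻¹ • (S + Sᵀ)) ∈ K :=
    fun S => Submodule.mem_map_of_mem
      (Matrix.mem_symmetricSubmodule.mpr (S.isSymm_add_transpose_self.smul _))
  obtain ⟨z, hzK, hz1, hz⟩ := hB.exists_mem_norm_eq_one_abs_apply_le hK (hsymK X) (hsymK Y)
    (by rw [← mNormR_eq_norm_euclideanEquiv, ← hX]; exact mNormR_symmetrize_le X)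
    (by rw [← mNormR_eq_norm_euclideanEquiv, ← hY]; exact mNormR_symmetrize_le Y)
  obtain ⟨Z, hZ, rfl⟩ := Submodule.mem_map.mp hzK
  refine ⟨Z, hZ, by rwa [mNormR_eq_norm_euclideanEquiv], ?_⟩
  simpa only [B, LinearMap.compl₁₂_apply, LinearEquiv.coe_coe, LinearEquiv.symm_apply_apply,
    hA.tensorForm_symmetrize] using hz

theorem tNormR_sub_outer_sq (A : Fin n → Fin n → Fin n → Fin n → ℝ) (lam : ℝ)
    (X Y : Matrix (Fin n) (Fin n) ℝ) :
    tNormR (fun i j k l => A i j k l - lam * X i j * Y k l) ^ 2 =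
      tNormR A ^ 2 - 2 * lam * tensorForm A X Y + lam ^ 2 * (mNormR X ^ 2 * mNormR Y ^ 2) := by
  have hprod : mNormR X ^ 2 * mNormR Y ^ 2 = ∑ i, ∑ j, ∑ k, ∑ l, X i j ^ 2 * Y k l ^ 2 := by
    rw [mNormR_sq, mNormR_sq]
    -- pulling out the left sums first keeps the indices in the order `i j k l`
    simp only [sum_mul]
    simp only [mul_sum]
  rw [hprod, tNormR_sq, tNormR_sq, tensorForm_apply]
  simp only [mul_sum, ← sum_sub_distrib, ← sum_add_distrib]
  exact sum_congr rfl fun i _ => sum_congr rfl fun j _ => sum_congr rfl fun k _ =>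
    sum_congr rfl fun l _ => by ring

theorem tNormR_sub_outer_le_of_abs_tensorForm_le {X Y Z : Matrix (Fin n) (Fin n) ℝ}
    (hX : mNormR X = 1) (hY : mNormR Y = 1) (hZ : mNormR Z = 1)
    (h : |tensorForm A X Y| ≤ |tensorForm A Z Z|) (lam : ℝ) :
    tNormR (fun i j k l => A i j k l - tensorForm A Z Z * Z i j * Z k l) ≤
      tNormR (fun i j k l => A i j k l - lam * X i j * Y k l) := by
  rw [← pow_le_pow_iff_left₀ (tNormR_nonneg _) (tNormR_nonneg _) two_ne_zero,
    tNormR_sub_outer_sq, tNormR_sub_outer_sq, hX, hY, hZ]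
  nlinarith [sq_le_sq.mpr h, sq_nonneg (lam - tensorForm A X Y)]

end

/-- For a partial-symmetric tensor, the best matrix outer product rank-one
approximation over arbitrary unit-norm matrix pairs is as good as the one
over a single unit-norm symmetric matrix. -/
theorem ps_best_rank_one_symmetric {n : ℕ}
    (A : Fin n → Fin n → Fin n → Fin n → ℝ) (hA : IsPS A) :
    sInf {v : ℝ | ∃ (lam : ℝ) (X₁ X₂ : Matrix (Fin n) (Fin n) ℝ),
        mNormR X₁ = 1 ∧ mNormR X₂ = 1 ∧
        v = tNormR (fun i j k l => A i j k l - lam * X₁ i j * X₂ k l)} =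
    sInf {v : ℝ | ∃ (lam : ℝ) (X : Matrix (Fin n) (Fin n) ℝ),
        X.IsSymm ∧ mNormR X = 1 ∧
        v = tNormR (fun i j k l => A i j k l - lam * X i j * X k l)} := by
  refine csInf_eq_csInf_of_forall_exists_le ?_ ?_
  · rintro _ ⟨lam, X₁, X₂, h₁, h₂, rfl⟩
    obtain ⟨X, hXs, hX, hle⟩ := hA.exists_isSymm_abs_tensorForm_le h₁ h₂
    exact ⟨_, ⟨_, X, hXs, hX, rfl⟩, tNormR_sub_outer_le_of_abs_tensorForm_le h₁ h₂ hX hle lam⟩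
  · rintro _ ⟨lam, X, -, hX, rfl⟩
    exact ⟨_, ⟨lam, X, X, hX, hX, rfl⟩, le_rfl⟩
end
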